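/- arXiv:math/0401122 — 7 statements merged into one kernel-verified Lean document; each statement's English description precedes it below -/
import Mathlib

section
/- For p ∈ [1,∞] with conjugate exponent q, any bounded linear operator x : ℓ_p → ℓ_p^N, and any bounded linear operator y : ℓ_q → ℓ_q^N, we have ∑_{m=1}^∞ ‖x δ_m‖_q · ‖y δ*_m‖_p ≤ N ‖x‖ ‖y‖, where δ_m and δ*_m denote the standard basis vectors of ℓ_p and ℓ_q respectively. -/
open scoped ENNReal

/-- Coordinate bound for `PiLp`. -/
private lemma piLp_coord_le {p : ℝ≥0∞} [Fact (1 ≤ p)] {N : ℕ}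
    (v : PiLp p (fun _ : Fin N => ℂ)) (n : Fin N) : ‖v n‖ ≤ ‖v‖ := by
  rcases eq_or_ne p ∞ with rfl | hp
  · rw [PiLp.norm_eq_ciSup]
    exact le_ciSup (f := fun i : Fin N => ‖v i‖) (Set.Finite.bddAbove (Set.finite_range _)) n
  · have hp0 : 0 < p.toReal :=
      ENNReal.toReal_pos (zero_lt_one.trans_le (Fact.out : 1 ≤ p)).ne' hp
    rw [PiLp.norm_eq_sum hp0]
    have h1 : ‖v n‖ = (‖v n‖ ^ p.toReal) ^ (1 / p.toReal) := by
      rw [← Real.rpow_mul (norm_nonneg _), mul_one_div, div_self hp0.ne', Real.rpow_one]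
    rw [h1]
    gcongr
    exact Finset.single_le_sum (fun i _ => Real.rpow_nonneg (norm_nonneg _) _)
      (Finset.mem_univ n)

private lemma coord_comp_norm_le {p p' : ℝ≥0∞} [Fact (1 ≤ p)] [Fact (1 ≤ p')] {N : ℕ}
    (x : lp (fun _ : ℕ => ℂ) p →L[ℂ] PiLp p' (fun _ : Fin N => ℂ)) (n : Fin N) :
    ‖(PiLp.proj p' (fun _ : Fin N => ℂ) n).comp x‖ ≤ ‖x‖ := by
  refine ContinuousLinearMap.opNorm_le_bound _ (norm_nonneg x) fun z => ?_
  calc ‖((PiLp.proj p' (fun _ : Fin N => ℂ) n).comp x) z‖ = ‖(x z) n‖ := rfl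
    _ ≤ ‖x z‖ := piLp_coord_le _ _
    _ ≤ ‖x‖ * ‖z‖ := x.le_opNorm z

private lemma row_bound {p q : ℝ≥0∞} [Fact (1 ≤ p)]
    (hpq : p.toReal.HolderConjugate q.toReal)
    (f : lp (fun _ : ℕ => ℂ) p →L[ℂ] ℂ) (S : Finset ℕ) :
    ∑ m ∈ S, ‖f (lp.single p m 1)‖ ^ q.toReal ≤ ‖f‖ ^ q.toReal := by
  set pr := p.toReal with hprdef
  set qr := q.toReal with hqrdef
  have hpr : 0 < pr := hpq.pos
  have hqr : 0 < qr := hpq.symm.pos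
  have hqr1 : 1 < qr := hpq.symm.lt
  set a : ℕ → ℂ := fun m => f (lp.single p m 1) with ha
  set c : ℕ → ℂ := fun m => (starRingEnd ℂ) (a m) * ((‖a m‖ ^ (qr - 2) : ℝ) : ℂ) with hc
  have hnc : ∀ m, ‖c m‖ = ‖a m‖ ^ (qr - 1) := by
    intro m
    by_cases h0 : a m = 0
    · simp [hc, h0, Real.zero_rpow (by linarith : qr - 1 ≠ 0)]
    · have hpos : 0 < ‖a m‖ := norm_pos_iff.2 h0
      rw [hc]
      simp only [norm_mul, RingHomIsometric.norm_map, Complex.norm_real,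
        Real.norm_eq_abs, abs_of_nonneg (Real.rpow_nonneg (norm_nonneg _) _)]
      rw [show ‖a m‖ * ‖a m‖ ^ (qr - 2) = ‖a m‖ ^ (1:ℝ) * ‖a m‖ ^ (qr - 2) by
            rw [Real.rpow_one],
        ← Real.rpow_add hpos]
      ring_nf
  have hca : ∀ m, c m * a m = ((‖a m‖ ^ qr : ℝ) : ℂ) := by
    intro m
    by_cases h0 : a m = 0
    · simp [hc, h0, Real.zero_rpow hqr.ne']
    · have hpos : 0 < ‖a m‖ := norm_pos_iff.2 h0
      have h1 : c m * a m = (a m * (starRingEnd ℂ) (a m)) * ((‖a m‖ ^ (qr - 2) : ℝ) : ℂ) := by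
        simp only [hc]; ring
      have h2 : (‖a m‖ : ℝ) ^ (2:ℕ) * ‖a m‖ ^ (qr - 2) = ‖a m‖ ^ qr := by
        rw [← Real.rpow_natCast ‖a m‖ 2, ← Real.rpow_add hpos]
        norm_num
      have h5 : Complex.normSq (a m) = ‖a m‖ ^ (2:ℕ) := by
        rw [Complex.normSq_eq_norm_sq]
      rw [h1, Complex.mul_conj, h5, ← Complex.ofReal_mul, h2]
  set z : lp (fun _ : ℕ => ℂ) p := ∑ m ∈ S, lp.single p m (c m) with hz
  set T : ℝ := ∑ m ∈ S, ‖a m‖ ^ qr with hT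
  show T ≤ ‖f‖ ^ qr
  have hT0 : 0 ≤ T := Finset.sum_nonneg fun m _ => Real.rpow_nonneg (norm_nonneg _) _
  have hfz : f z = (T : ℂ) := by
    rw [hz, map_sum]
    have hsing : ∀ m, f (lp.single p m (c m)) = c m * a m := by
      intro m
      have h1 : lp.single p m (c m) = c m • (lp.single p m 1 : lp (fun _ : ℕ => ℂ) p) := by
        refine lp.ext (funext fun j => ?_)
        by_cases hj : j = m
        · subst hj
          simp [lp.single_apply_self, lp.coeFn_smul]
        · simp [lp.single_apply_ne p m _ hj, lp.coeFn_smul, Pi.single_apply, hj]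
      rw [h1, map_smul, smul_eq_mul, ha]
    simp_rw [hsing, hca, hT]
    push_cast
    rfl
  have hznorm : ‖z‖ ^ pr = T := by
    rw [hz, lp.norm_sum_single hpr, hT]
    refine Finset.sum_congr rfl fun m _ => ?_
    rw [hnc m, ← Real.rpow_mul (norm_nonneg _), hpq.symm.sub_one_mul_conj]
  have hzn : ‖z‖ = T ^ (1 / pr) := by
    have hinv : (‖z‖ ^ pr) ^ (1 / pr) = ‖z‖ := by
      rw [← Real.rpow_mul (norm_nonneg z), mul_one_div, div_self hpr.ne', Real.rpow_one]
    rw [← hinv, hznorm]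
  have hTfz : ‖f z‖ = T := by
    rw [hfz, Complex.norm_real, Real.norm_eq_abs, abs_of_nonneg hT0]
  have key : T ≤ ‖f‖ * T ^ (1 / pr) := by
    calc T = ‖f z‖ := hTfz.symm
      _ ≤ ‖f‖ * ‖z‖ := f.le_opNorm z
      _ = ‖f‖ * T ^ (1 / pr) := by rw [hzn]
  rcases hT0.eq_or_lt with h0 | hTpos
  · rw [← h0]
    exact Real.rpow_nonneg (norm_nonneg f) _
  · have hsplit : T ^ (1 / pr) * T ^ (1 / qr) = T := by
      rw [one_div, one_div, ← Real.rpow_add hTpos, hpq.inv_add_inv_eq_one, Real.rpow_one]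
    have hppos : 0 < T ^ (1 / pr) := Real.rpow_pos_of_pos hTpos _
    have h2 : T ^ (1 / qr) ≤ ‖f‖ := by
      have e1 : T ^ (1 / qr) * T ^ (1 / pr) = T := by rw [mul_comm]; exact hsplit
      have hmul : T ^ (1 / qr) * T ^ (1 / pr) ≤ ‖f‖ * T ^ (1 / pr) := e1.trans_le key
      exact le_of_mul_le_mul_right hmul hppos
    have h3 : T = (T ^ (1 / qr)) ^ qr := by
      rw [← Real.rpow_mul hT0, one_div_mul_cancel hqr.ne', Real.rpow_one]
    have h4 : (T ^ (1 / qr)) ^ qr ≤ ‖f‖ ^ qr :=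
      Real.rpow_le_rpow (Real.rpow_nonneg hT0 _) h2 hqr.le
    linarith

private lemma row_bound_top (f : lp (fun _ : ℕ => ℂ) ∞ →L[ℂ] ℂ) (S : Finset ℕ) :
    ∑ m ∈ S, ‖f (lp.single ∞ m 1)‖ ≤ ‖f‖ := by
  classical
  set a : ℕ → ℂ := fun m => f (lp.single ∞ m 1) with ha
  set c : ℕ → ℂ := fun m => if a m = 0 then 0 else (starRingEnd ℂ) (a m) / ‖a m‖ with hc
  have hcnorm : ∀ m, ‖c m‖ ≤ 1 := by
    intro m
    by_cases h0 : a m = 0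
    · simp [hc, h0]
    · have hpos : 0 < ‖a m‖ := norm_pos_iff.2 h0
      simp only [hc, if_neg h0, norm_div, RingHomIsometric.norm_map, Complex.norm_real,
        Real.norm_eq_abs, abs_of_nonneg hpos.le]
      rw [div_self hpos.ne']
  have hca : ∀ m, c m * a m = ((‖a m‖ : ℝ) : ℂ) := by
    intro m
    by_cases h0 : a m = 0
    · simp [hc, h0]
    · have hpos : 0 < ‖a m‖ := norm_pos_iff.2 h0
      have h5 : Complex.normSq (a m) = ‖a m‖ ^ (2:ℕ) := by
        rw [Complex.normSq_eq_norm_sq]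
      have h1 : c m * a m = (a m * (starRingEnd ℂ) (a m)) / ((‖a m‖ : ℝ) : ℂ) := by
        simp only [hc, if_neg h0]; ring
      rw [h1, Complex.mul_conj, h5]
      rw [show ((‖a m‖ ^ (2:ℕ) : ℝ) : ℂ) = ((‖a m‖ : ℝ) : ℂ) * ((‖a m‖ : ℝ) : ℂ) by
            push_cast; ring]
      rw [mul_div_assoc, div_self (by exact_mod_cast hpos.ne'), mul_one]
  set z : lp (fun _ : ℕ => ℂ) ∞ := ∑ m ∈ S, lp.single ∞ m (c m) with hz
  have hznorm : ‖z‖ ≤ 1 := by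
    refine lp.norm_le_of_forall_le zero_le_one fun j => ?_
    have hzj : (z : ∀ _ : ℕ, ℂ) j = if j ∈ S then c j else 0 := by
      simp only [hz, lp.coeFn_sum, Finset.sum_apply, lp.single_apply, Finset.sum_dite_eq, Pi.single_apply, Finset.sum_ite_eq]
    rw [hzj]
    split_ifs with h
    · exact hcnorm j
    · simp
  have hfz : f z = ((∑ m ∈ S, ‖a m‖ : ℝ) : ℂ) := by
    rw [hz, map_sum]
    have hsing : ∀ m, f (lp.single ∞ m (c m)) = c m * a m := by
      intro m
      have h1 : lp.single ∞ m (c m)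
          = c m • (lp.single ∞ m 1 : lp (fun _ : ℕ => ℂ) ∞) := by
        refine lp.ext (funext fun j => ?_)
        by_cases hj : j = m
        · subst hj
          simp [lp.single_apply_self, lp.coeFn_smul]
        · simp [lp.single_apply_ne ∞ m _ hj, lp.coeFn_smul, Pi.single_apply, hj]
      rw [h1, map_smul, smul_eq_mul, ha]
    simp_rw [hsing, hca]
    push_cast
    rfl
  have h2 : ‖f z‖ = ∑ m ∈ S, ‖a m‖ := by
    rw [hfz, Complex.norm_real, Real.norm_eq_abs,
      abs_of_nonneg (Finset.sum_nonneg fun m _ => norm_nonneg _)]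
  calc ∑ m ∈ S, ‖a m‖ = ‖f z‖ := h2.symm
    _ ≤ ‖f‖ * ‖z‖ := f.le_opNorm z
    _ ≤ ‖f‖ * 1 := by gcongr
    _ = ‖f‖ := mul_one _

private lemma finite_case {p q : ℝ≥0∞} [Fact (1 ≤ p)] [Fact (1 ≤ q)]
    (hpq' : p.toReal.HolderConjugate q.toReal) (N : ℕ)
    (x : lp (fun _ : ℕ => ℂ) p →L[ℂ] PiLp p (fun _ : Fin N => ℂ))
    (y : lp (fun _ : ℕ => ℂ) q →L[ℂ] PiLp q (fun _ : Fin N => ℂ)) (S : Finset ℕ) :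
    ∑ m ∈ S,
        ‖(WithLp.equiv q (Fin N → ℂ)).symm (WithLp.equiv p (Fin N → ℂ) (x (lp.single p m 1)))‖ *
        ‖(WithLp.equiv p (Fin N → ℂ)).symm (WithLp.equiv q (Fin N → ℂ) (y (lp.single q m 1)))‖ ≤
      N * ‖x‖ * ‖y‖ := by
  have hpr : 0 < p.toReal := hpq'.pos
  have hqr : 0 < q.toReal := hpq'.symm.pos
  set pr := p.toReal with hprdef
  set qr := q.toReal with hqrdef
  set F : ℕ → ℝ := fun m =>
    ‖(WithLp.equiv q (Fin N → ℂ)).symm (WithLp.equiv p (Fin N → ℂ) (x (lp.single p m 1)))‖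
    with hF
  set G : ℕ → ℝ := fun m =>
    ‖(WithLp.equiv p (Fin N → ℂ)).symm (WithLp.equiv q (Fin N → ℂ) (y (lp.single q m 1)))‖
    with hG
  have hF0 : ∀ m, 0 ≤ F m := fun m => norm_nonneg _
  have hG0 : ∀ m, 0 ≤ G m := fun m => norm_nonneg _
  show ∑ m ∈ S, F m * G m ≤ (N : ℝ) * ‖x‖ * ‖y‖
  -- the `q`-power of `F`
  have hFq : ∀ m, F m ^ qr = ∑ n : Fin N, ‖x (lp.single p m 1) n‖ ^ qr := by
    intro m
    rw [show F m = (∑ n : Fin N, ‖x (lp.single p m 1) n‖ ^ qr) ^ (1 / qr) from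
          PiLp.norm_eq_sum hqr _,
      ← Real.rpow_mul (Finset.sum_nonneg fun n _ => Real.rpow_nonneg (norm_nonneg _) _),
      one_div_mul_cancel hqr.ne', Real.rpow_one]
  have hGp : ∀ m, G m ^ pr = ∑ n : Fin N, ‖y (lp.single q m 1) n‖ ^ pr := by
    intro m
    rw [show G m = (∑ n : Fin N, ‖y (lp.single q m 1) n‖ ^ pr) ^ (1 / pr) from
          PiLp.norm_eq_sum hpr _,
      ← Real.rpow_mul (Finset.sum_nonneg fun n _ => Real.rpow_nonneg (norm_nonneg _) _),
      one_div_mul_cancel hpr.ne', Real.rpow_one]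
  have hA : ∑ m ∈ S, F m ^ qr ≤ (N : ℝ) * ‖x‖ ^ qr := by
    have hrow : ∀ n : Fin N, ∑ m ∈ S, ‖x (lp.single p m 1) n‖ ^ qr ≤ ‖x‖ ^ qr := by
      intro n
      have h1 := row_bound hpq' ((PiLp.proj p (fun _ : Fin N => ℂ) n).comp x) S
      have h2 : ‖(PiLp.proj p (fun _ : Fin N => ℂ) n).comp x‖ ≤ ‖x‖ := coord_comp_norm_le x n
      calc ∑ m ∈ S, ‖x (lp.single p m 1) n‖ ^ qr
          = ∑ m ∈ S, ‖((PiLp.proj p (fun _ : Fin N => ℂ) n).comp x) (lp.single p m 1)‖ ^ qr :=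
            rfl
        _ ≤ ‖(PiLp.proj p (fun _ : Fin N => ℂ) n).comp x‖ ^ qr := h1
        _ ≤ ‖x‖ ^ qr := Real.rpow_le_rpow (norm_nonneg _) h2 hqr.le
    calc ∑ m ∈ S, F m ^ qr
        = ∑ m ∈ S, ∑ n : Fin N, ‖x (lp.single p m 1) n‖ ^ qr :=
          Finset.sum_congr rfl fun m _ => hFq m
      _ = ∑ n : Fin N, ∑ m ∈ S, ‖x (lp.single p m 1) n‖ ^ qr := Finset.sum_comm
      _ ≤ ∑ _n : Fin N, ‖x‖ ^ qr := Finset.sum_le_sum fun n _ => hrow n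
      _ = (N : ℝ) * ‖x‖ ^ qr := by
          simp [Finset.sum_const, Finset.card_univ, nsmul_eq_mul]
  have hB : ∑ m ∈ S, G m ^ pr ≤ (N : ℝ) * ‖y‖ ^ pr := by
    have hrow : ∀ n : Fin N, ∑ m ∈ S, ‖y (lp.single q m 1) n‖ ^ pr ≤ ‖y‖ ^ pr := by
      intro n
      have h1 := row_bound hpq'.symm ((PiLp.proj q (fun _ : Fin N => ℂ) n).comp y) S
      have h2 : ‖(PiLp.proj q (fun _ : Fin N => ℂ) n).comp y‖ ≤ ‖y‖ := coord_comp_norm_le y n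
      calc ∑ m ∈ S, ‖y (lp.single q m 1) n‖ ^ pr
          = ∑ m ∈ S, ‖((PiLp.proj q (fun _ : Fin N => ℂ) n).comp y) (lp.single q m 1)‖ ^ pr :=
            rfl
        _ ≤ ‖(PiLp.proj q (fun _ : Fin N => ℂ) n).comp y‖ ^ pr := h1
        _ ≤ ‖y‖ ^ pr := Real.rpow_le_rpow (norm_nonneg _) h2 hpr.le
    calc ∑ m ∈ S, G m ^ pr
        = ∑ m ∈ S, ∑ n : Fin N, ‖y (lp.single q m 1) n‖ ^ pr :=
          Finset.sum_congr rfl fun m _ => hGp m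
      _ = ∑ n : Fin N, ∑ m ∈ S, ‖y (lp.single q m 1) n‖ ^ pr := Finset.sum_comm
      _ ≤ ∑ _n : Fin N, ‖y‖ ^ pr := Finset.sum_le_sum fun n _ => hrow n
      _ = (N : ℝ) * ‖y‖ ^ pr := by
          simp [Finset.sum_const, Finset.card_univ, nsmul_eq_mul]
  have hA0 : 0 ≤ ∑ m ∈ S, F m ^ qr :=
    Finset.sum_nonneg fun m _ => Real.rpow_nonneg (hF0 m) _
  have hB0 : 0 ≤ ∑ m ∈ S, G m ^ pr :=
    Finset.sum_nonneg fun m _ => Real.rpow_nonneg (hG0 m) _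
  have holder := Real.inner_le_Lp_mul_Lq (s := S) (f := F) (g := G) hpq'.symm
  rw [show (∑ m ∈ S, |F m| ^ qr) = ∑ m ∈ S, F m ^ qr from
        Finset.sum_congr rfl fun m _ => by rw [abs_of_nonneg (hF0 m)],
      show (∑ m ∈ S, |G m| ^ pr) = ∑ m ∈ S, G m ^ pr from
        Finset.sum_congr rfl fun m _ => by rw [abs_of_nonneg (hG0 m)]] at holder
  have hsum : 1 / qr + 1 / pr = 1 := by
    rw [one_div, one_div]; exact hpq'.symm.inv_add_inv_eq_one
  calc ∑ m ∈ S, F m * G m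
      ≤ (∑ m ∈ S, F m ^ qr) ^ (1 / qr) * (∑ m ∈ S, G m ^ pr) ^ (1 / pr) := holder
    _ ≤ ((N : ℝ) * ‖x‖ ^ qr) ^ (1 / qr) * ((N : ℝ) * ‖y‖ ^ pr) ^ (1 / pr) :=
        mul_le_mul (Real.rpow_le_rpow hA0 hA (by positivity))
          (Real.rpow_le_rpow hB0 hB (by positivity))
          (Real.rpow_nonneg hB0 _) (Real.rpow_nonneg (by positivity) _)
    _ = ((N : ℝ) ^ (1 / qr) * ‖x‖) * ((N : ℝ) ^ (1 / pr) * ‖y‖) := by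
        rw [Real.mul_rpow (Nat.cast_nonneg N) (Real.rpow_nonneg (norm_nonneg x) _),
          Real.mul_rpow (Nat.cast_nonneg N) (Real.rpow_nonneg (norm_nonneg y) _),
          ← Real.rpow_mul (norm_nonneg x), mul_one_div, div_self hqr.ne', Real.rpow_one,
          ← Real.rpow_mul (norm_nonneg y), mul_one_div, div_self hpr.ne', Real.rpow_one]
    _ = ((N : ℝ) ^ (1 / qr) * (N : ℝ) ^ (1 / pr)) * (‖x‖ * ‖y‖) := by ring
    _ = (N : ℝ) * ‖x‖ * ‖y‖ := by
        rw [← Real.rpow_add' (Nat.cast_nonneg N) (by rw [hsum]; norm_num), hsum,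
          Real.rpow_one]
        ring

private lemma one_top_case (N : ℕ)
    (x : lp (fun _ : ℕ => ℂ) 1 →L[ℂ] PiLp 1 (fun _ : Fin N => ℂ))
    (y : lp (fun _ : ℕ => ℂ) ∞ →L[ℂ] PiLp ∞ (fun _ : Fin N => ℂ)) (S : Finset ℕ) :
    ∑ m ∈ S,
        ‖(WithLp.equiv ∞ (Fin N → ℂ)).symm (WithLp.equiv 1 (Fin N → ℂ) (x (lp.single 1 m 1)))‖ *
        ‖(WithLp.equiv 1 (Fin N → ℂ)).symm (WithLp.equiv ∞ (Fin N → ℂ) (y (lp.single ∞ m 1)))‖ ≤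
      N * ‖x‖ * ‖y‖ := by
  set F : ℕ → ℝ := fun m =>
    ‖(WithLp.equiv ∞ (Fin N → ℂ)).symm (WithLp.equiv 1 (Fin N → ℂ) (x (lp.single 1 m 1)))‖
    with hF
  set G : ℕ → ℝ := fun m =>
    ‖(WithLp.equiv 1 (Fin N → ℂ)).symm (WithLp.equiv ∞ (Fin N → ℂ) (y (lp.single ∞ m 1)))‖
    with hG
  have hG0 : ∀ m, 0 ≤ G m := fun m => norm_nonneg _
  show ∑ m ∈ S, F m * G m ≤ (N : ℝ) * ‖x‖ * ‖y‖
  have hone : (0:ℝ) < (1 : ℝ≥0∞).toReal := by norm_num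
  have hsingle : ∀ m : ℕ, ‖(lp.single 1 m 1 : lp (fun _ : ℕ => ℂ) 1)‖ = 1 := by
    intro m
    rw [lp.norm_single (E := fun _ : ℕ => ℂ) zero_lt_one m (1:ℂ)]
    simp
  have hFle : ∀ m, F m ≤ ‖x‖ := by
    intro m
    rw [show F m = ⨆ n : Fin N, ‖x (lp.single 1 m 1) n‖ from PiLp.norm_eq_ciSup _]
    refine Real.iSup_le (fun n => ?_) (norm_nonneg x)
    calc ‖x (lp.single 1 m 1) n‖ ≤ ‖x (lp.single 1 m 1)‖ := piLp_coord_le _ _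
      _ ≤ ‖x‖ * ‖(lp.single 1 m 1 : lp (fun _ : ℕ => ℂ) 1)‖ := x.le_opNorm _
      _ = ‖x‖ := by rw [hsingle m, mul_one]
  have hGsum : ∑ m ∈ S, G m ≤ (N : ℝ) * ‖y‖ := by
    have hGeq : ∀ m, G m = ∑ n : Fin N, ‖y (lp.single ∞ m 1) n‖ := by
      intro m
      rw [show G m = (∑ n : Fin N, ‖y (lp.single ∞ m 1) n‖ ^ (1:ℝ≥0∞).toReal)
            ^ (1 / (1:ℝ≥0∞).toReal) from PiLp.norm_eq_sum hone _]
      simp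
    have hrow : ∀ n : Fin N, ∑ m ∈ S, ‖y (lp.single ∞ m 1) n‖ ≤ ‖y‖ := by
      intro n
      have h1 := row_bound_top ((PiLp.proj ∞ (fun _ : Fin N => ℂ) n).comp y) S
      have h2 : ‖(PiLp.proj ∞ (fun _ : Fin N => ℂ) n).comp y‖ ≤ ‖y‖ := coord_comp_norm_le y n
      calc ∑ m ∈ S, ‖y (lp.single ∞ m 1) n‖
          = ∑ m ∈ S, ‖((PiLp.proj ∞ (fun _ : Fin N => ℂ) n).comp y) (lp.single ∞ m 1)‖ := rfl
        _ ≤ ‖(PiLp.proj ∞ (fun _ : Fin N => ℂ) n).comp y‖ := h1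
        _ ≤ ‖y‖ := h2
    calc ∑ m ∈ S, G m = ∑ m ∈ S, ∑ n : Fin N, ‖y (lp.single ∞ m 1) n‖ :=
          Finset.sum_congr rfl fun m _ => hGeq m
      _ = ∑ n : Fin N, ∑ m ∈ S, ‖y (lp.single ∞ m 1) n‖ := Finset.sum_comm
      _ ≤ ∑ _n : Fin N, ‖y‖ := Finset.sum_le_sum fun n _ => hrow n
      _ = (N : ℝ) * ‖y‖ := by simp [Finset.sum_const, Finset.card_univ, nsmul_eq_mul]
  calc ∑ m ∈ S, F m * G m ≤ ∑ m ∈ S, ‖x‖ * G m :=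
        Finset.sum_le_sum fun m _ => mul_le_mul_of_nonneg_right (hFle m) (hG0 m)
    _ = ‖x‖ * ∑ m ∈ S, G m := by rw [Finset.mul_sum]
    _ ≤ ‖x‖ * ((N : ℝ) * ‖y‖) := mul_le_mul_of_nonneg_left hGsum (norm_nonneg x)
    _ = (N : ℝ) * ‖x‖ * ‖y‖ := by ring

/-- For conjugate exponents `p, q`, a bounded operator `x : ℓ_p → ℓ_p^N` and a bounded
operator `y : ℓ_q → ℓ_q^N`, we have `∑_m ‖x δ_m‖_q ‖y δ*_m‖_p ≤ N ‖x‖ ‖y‖`, where the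
images are measured in the `ℓ_q^N`- and `ℓ_p^N`-norms respectively. -/
theorem sum_norm_mul_norm_le (p q : ℝ≥0∞) [Fact (1 ≤ p)] [Fact (1 ≤ q)] (hpq : 1 / p + 1 / q = 1) (N : ℕ)
    (x : lp (fun _ : ℕ => ℂ) p →L[ℂ] PiLp p (fun _ : Fin N => ℂ))
    (y : lp (fun _ : ℕ => ℂ) q →L[ℂ] PiLp q (fun _ : Fin N => ℂ)) :
    ∑' m : ℕ,
        ‖(WithLp.equiv q (Fin N → ℂ)).symm (WithLp.equiv p (Fin N → ℂ) (x (lp.single p m 1)))‖ *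
        ‖(WithLp.equiv p (Fin N → ℂ)).symm (WithLp.equiv q (Fin N → ℂ) (y (lp.single q m 1)))‖ ≤
      N * ‖x‖ * ‖y‖ := by
  have hconj : p⁻¹ + q⁻¹ = 1 := by rwa [one_div, one_div] at hpq
  refine tsum_le_of_sum_le' (by positivity) fun S => ?_
  rcases eq_or_ne p 1 with rfl | hp1
  · -- p = 1, q = ∞
    have hq : q = ∞ := by
      have := hconj
      have h2 : (1:ℝ≥0∞) + q⁻¹ = 1 + 0 := by simpa using this
      exact ENNReal.inv_eq_zero.mp ((ENNReal.add_right_inj ENNReal.one_ne_top).mp h2)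
    subst hq
    exact one_top_case N x y S
  rcases eq_or_ne p ∞ with rfl | hptop
  · -- p = ∞, q = 1
    have hq : q = 1 := by
      have h := hconj
      rw [ENNReal.inv_top, zero_add] at h
      exact ENNReal.inv_eq_one.mp h
    subst hq
    have h := one_top_case N y x S
    calc ∑ m ∈ S, _ = ∑ m ∈ S,
          ‖(WithLp.equiv ∞ (Fin N → ℂ)).symm (WithLp.equiv 1 (Fin N → ℂ) (y (lp.single 1 m 1)))‖ *
          ‖(WithLp.equiv 1 (Fin N → ℂ)).symm (WithLp.equiv ∞ (Fin N → ℂ) (x (lp.single ∞ m 1)))‖ :=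
          Finset.sum_congr rfl fun m _ => mul_comm _ _
      _ ≤ N * ‖y‖ * ‖x‖ := h
      _ = N * ‖x‖ * ‖y‖ := by ring
  · -- 1 < p < ∞
    have hp1' : 1 < p := lt_of_le_of_ne (Fact.out : 1 ≤ p) (Ne.symm hp1)
    have hqtop : q ≠ ∞ := by
      rintro rfl
      have h := hconj
      rw [ENNReal.inv_top, add_zero] at h
      exact hp1 (ENNReal.inv_eq_one.mp h)
    have hq1 : 1 < q := by
      rcases lt_or_ge 1 q with h | h
      · exact h
      · exfalso
        have hq1' : q = 1 := le_antisymm h (Fact.out : 1 ≤ q)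
        subst hq1'
        have hcontr := hconj
        rw [inv_one] at hcontr
        have h2 : (1:ℝ≥0∞) + p⁻¹ = 1 + 0 := by
          rw [add_comm] at hcontr
          simpa using hcontr
        have h3 : p⁻¹ = 0 := (ENNReal.add_right_inj ENNReal.one_ne_top).mp h2
        exact hptop (ENNReal.inv_eq_zero.mp h3)
    have hpq' : p.toReal.HolderConjugate q.toReal := by
      constructor
      · rw [inv_one]
        have h := hconj
        have hp0 : p ≠ 0 := (zero_lt_one.trans hp1').ne'
        have hq0 : q ≠ 0 := (zero_lt_one.trans hq1).ne'
        have h1 : (p⁻¹ + q⁻¹).toReal = (1:ℝ≥0∞).toReal := by rw [h]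
        rw [ENNReal.toReal_add (by simpa using hp0) (by simpa using hq0),
          ENNReal.toReal_inv, ENNReal.toReal_inv, ENNReal.toReal_one] at h1
        exact h1
      · exact ENNReal.toReal_pos (zero_lt_one.trans hp1').ne' hptop
      · exact ENNReal.toReal_pos (zero_lt_one.trans hq1).ne' hqtop
    exact finite_case hpq' N x y S
end

section
/- For a matrix x = (x_{ij}) defining a bounded operator on ℓ_p with N rows (i.e. x : ℓ_p → ℓ_p^N) whose entries are all nonnegative, the columns satisfy (∑_{m=1}^∞ ‖x δ_m‖_p^q)^{1/q} ≤ N^{1/q} ‖x‖, where q is the conjugate exponent of p. -/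
open scoped ENNReal

private theorem piLp_norm_le_l1 (p : ℝ≥0∞) [Fact (1 ≤ p)] (N : ℕ)
    (y : PiLp p (fun _ : Fin N => ℝ)) :
    ‖y‖ ≤ ∑ i, |y i| := by
  rcases eq_or_ne p ∞ with rfl | hp
  · rw [PiLp.norm_eq_ciSup]
    rcases isEmpty_or_nonempty (Fin N) with h | h
    · simp [Real.iSup_of_isEmpty]
    · exact ciSup_le fun i => by
        simpa [Real.norm_eq_abs] using
          Finset.single_le_sum (f := fun j => |y j|) (fun j _ => abs_nonneg _) (Finset.mem_univ i)
  · have hp1 : (1:ℝ) ≤ p.toReal := by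
      have := (Fact.out : 1 ≤ p)
      rw [← ENNReal.toReal_one]
      exact ENNReal.toReal_mono hp this
    have hp0 : 0 < p.toReal := lt_of_lt_of_le one_pos hp1
    rw [PiLp.norm_eq_sum hp0]
    set S := ∑ i, |y i| with hS
    have hSnn : 0 ≤ S := Finset.sum_nonneg fun i _ => abs_nonneg _
    have key : ∑ i, ‖y i‖ ^ p.toReal ≤ S ^ p.toReal := by
      have h1 : ∀ i : Fin N, ‖y i‖ ^ p.toReal ≤ |y i| * S ^ (p.toReal - 1) := by
        intro i
        rw [Real.norm_eq_abs]
        have : |y i| ^ p.toReal = |y i| * |y i| ^ (p.toReal - 1) := by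
          rw [← Real.rpow_one_add' (abs_nonneg _) (by linarith)]
          ring_nf
        rw [this]
        exact mul_le_mul_of_nonneg_left
          (Real.rpow_le_rpow (abs_nonneg _)
            (Finset.single_le_sum (f := fun j => |y j|) (fun j _ => abs_nonneg _)
              (Finset.mem_univ i)) (by linarith)) (abs_nonneg _)
      calc ∑ i, ‖y i‖ ^ p.toReal ≤ ∑ i, |y i| * S ^ (p.toReal - 1) :=
            Finset.sum_le_sum fun i _ => h1 i
        _ = S * S ^ (p.toReal - 1) := by rw [← Finset.sum_mul]
        _ = S ^ p.toReal := by
            rw [← Real.rpow_one_add' hSnn (by linarith)]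
            ring_nf
    calc (∑ i, ‖y i‖ ^ p.toReal) ^ (1 / p.toReal)
        ≤ (S ^ p.toReal) ^ (1 / p.toReal) :=
          Real.rpow_le_rpow (Finset.sum_nonneg fun i _ => Real.rpow_nonneg (norm_nonneg _) _)
            key (by positivity)
      _ = S := by
          rw [← Real.rpow_mul hSnn, mul_one_div_cancel hp0.ne', Real.rpow_one]

private theorem piLp_l1_le (p q : ℝ≥0∞) [Fact (1 ≤ p)] (hpq : 1 / p + 1 / q = 1) (hq : q ≠ ∞)
    (N : ℕ) (y : PiLp p (fun _ : Fin N => ℝ)) :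
    ∑ i, |y i| ≤ (N : ℝ) ^ (1 / q.toReal) * ‖y‖ := by
  have hconj : ENNReal.HolderConjugate p q := ENNReal.holderConjugate_iff.mpr (by simpa [one_div] using hpq)
  rcases eq_or_ne p ∞ with rfl | hp
  · have hq1 : q = 1 := by
      have h := ENNReal.HolderConjugate.inv_add_inv_eq_one ∞ q
      simp only [ENNReal.inv_top, zero_add] at h
      exact ENNReal.inv_eq_one.mp h
    subst hq1
    simp only [ENNReal.toReal_one, div_one, Real.rpow_one]
    calc ∑ i, |y i| ≤ ∑ _i : Fin N, ‖y‖ := by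
          refine Finset.sum_le_sum fun i _ => ?_
          rw [PiLp.norm_eq_ciSup]
          exact le_ciSup (f := fun j => ‖y j‖) (Set.Finite.bddAbove (Set.finite_range _)) i
      _ = (N : ℝ) * ‖y‖ := by simp [mul_comm]
  · have h := ENNReal.HolderConjugate.inv_add_inv_eq_one p q
    have hq1 : 1 < q := by
      by_contra hcon
      push_neg at hcon
      have hqinv : (1:ℝ≥0∞) ≤ q⁻¹ := ENNReal.one_le_inv.2 hcon
      have hp0 : p⁻¹ = 1 - q⁻¹ := ENNReal.eq_sub_of_add_eq (by simpa using (ENNReal.HolderConjugate.ne_zero q p)) h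
      rw [tsub_eq_zero_of_le hqinv] at hp0
      exact hp (by simpa using hp0)
    have hp1 : 1 < p := (ENNReal.HolderConjugate.one_le p q).lt_of_ne' (by
      rintro rfl
      rw [inv_one] at h
      have : q⁻¹ = 0 := (ENNReal.add_right_inj ENNReal.one_ne_top).1 (by simpa using h)
      exact hq (by simpa using this))
    have hpr1 : 1 < p.toReal := by
      rw [← ENNReal.toReal_one]
      exact (ENNReal.toReal_lt_toReal ENNReal.one_ne_top hp).2 hp1
    have hsum : (p.toReal)⁻¹ + (q.toReal)⁻¹ = 1 := by
      have := congrArg ENNReal.toReal hpq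
      rwa [ENNReal.toReal_add (by simp [(ENNReal.HolderConjugate.ne_zero p q)]) (by simp [(ENNReal.HolderConjugate.ne_zero q p)]),
        ENNReal.toReal_div, ENNReal.toReal_div, ENNReal.toReal_one, one_div, one_div] at this
    have hconj' : Real.HolderConjugate p.toReal q.toReal := Real.holderConjugate_iff.mpr ⟨hpr1, hsum⟩
    have hpr0 : 0 < p.toReal := by linarith
    have H := Real.inner_le_Lp_mul_Lq (s := Finset.univ) (fun i : Fin N => |y i|)
      (fun _ => (1:ℝ)) hconj'
    simp only [mul_one, abs_abs, abs_one, Real.one_rpow, Finset.sum_const, Finset.card_univ,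
      Fintype.card_fin, nsmul_eq_mul] at H
    rw [PiLp.norm_eq_sum hpr0]
    simpa [Real.norm_eq_abs, mul_comm] using H

private theorem col_key (p q : ℝ≥0∞) [Fact (1 ≤ p)] (hpq : 1 / p + 1 / q = 1) (hq : q ≠ ∞)
    (N : ℕ) (x : lp (fun _ : ℕ => ℝ) p →L[ℝ] PiLp p (fun _ : Fin N => ℝ))
    (hpos : ∀ (m : ℕ) (i : Fin N), 0 ≤ x (lp.single p m 1) i)
    (b : ℕ → ℝ) (hb : ∀ m, 0 ≤ b m) (F : Finset ℕ) :
    ∑ m ∈ F, b m * ‖x (lp.single p m 1)‖ ≤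
      (N : ℝ) ^ (1 / q.toReal) * ‖x‖ * ‖(∑ m ∈ F, lp.single p m (b m) : lp (fun _ : ℕ => ℝ) p)‖ := by
  set v : lp (fun _ : ℕ => ℝ) p := ∑ m ∈ F, lp.single p m (b m) with hv
  have happ : ∀ i, x v i = ∑ m ∈ F, b m * x (lp.single p m 1) i := by
    intro i
    have h : ∀ m, lp.single p m (b m) = b m • (lp.single p m (1:ℝ) : lp (fun _ : ℕ => ℝ) p) := by
      intro m
      rw [← lp.single_smul, smul_eq_mul, mul_one]
    rw [hv]
    simp_rw [h, map_sum, map_smul]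
    rw [WithLp.ofLp_sum]
    exact Finset.sum_apply i F _
  have hNnn : (0:ℝ) ≤ (N : ℝ) ^ (1 / q.toReal) := Real.rpow_nonneg (Nat.cast_nonneg N) _
  calc ∑ m ∈ F, b m * ‖x (lp.single p m 1)‖
      ≤ ∑ m ∈ F, b m * ∑ i, |x (lp.single p m 1) i| := by
        refine Finset.sum_le_sum fun m _ => ?_
        exact mul_le_mul_of_nonneg_left (piLp_norm_le_l1 p N _) (hb m)
    _ = ∑ i, x v i := by
        simp_rw [Finset.mul_sum]
        rw [Finset.sum_comm]
        refine Finset.sum_congr rfl fun i _ => ?_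
        rw [happ i]
        refine Finset.sum_congr rfl fun m _ => ?_
        rw [abs_of_nonneg (hpos m i)]
    _ ≤ ∑ i, |x v i| := Finset.sum_le_sum fun i _ => le_abs_self _
    _ ≤ (N : ℝ) ^ (1 / q.toReal) * ‖x v‖ := piLp_l1_le p q hpq hq N _
    _ ≤ (N : ℝ) ^ (1 / q.toReal) * (‖x‖ * ‖v‖) :=
        mul_le_mul_of_nonneg_left (x.le_opNorm v) hNnn
    _ = (N : ℝ) ^ (1 / q.toReal) * ‖x‖ * ‖v‖ := by ring

/-- For a bounded operator `x : ℓ_p → ℓ_p^N` whose matrix has nonnegative entries,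
`(∑_m ‖x δ_m‖_p^q)^{1/q} ≤ N^{1/q} ‖x‖`, where `q` is the conjugate exponent of `p`. -/
theorem sum_col_norm_rpow_le (p q : ℝ≥0∞) [Fact (1 ≤ p)] [Fact (1 ≤ q)] (hpq : 1 / p + 1 / q = 1) (hq : q ≠ ∞)
    (N : ℕ) (x : lp (fun _ : ℕ => ℝ) p →L[ℝ] PiLp p (fun _ : Fin N => ℝ))
    (hpos : ∀ (m : ℕ) (i : Fin N), 0 ≤ x (lp.single p m 1) i) :
    (∑' m : ℕ, ‖x (lp.single p m 1)‖ ^ q.toReal) ^ (1 / q.toReal) ≤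
      (N : ℝ) ^ (1 / q.toReal) * ‖x‖ := by
  have hconj : ENNReal.HolderConjugate p q := ENNReal.holderConjugate_iff.mpr (by simpa [one_div] using hpq)
  set a : ℕ → ℝ := fun m => ‖x (lp.single p m 1)‖ with ha
  have hann : ∀ m, 0 ≤ a m := fun m => norm_nonneg _
  set C : ℝ := (N : ℝ) ^ (1 / q.toReal) * ‖x‖ with hC
  have hCnn : 0 ≤ C := mul_nonneg (Real.rpow_nonneg (Nat.cast_nonneg N) _) (norm_nonneg _)
  have hqr1 : (1:ℝ) ≤ q.toReal := by
    rw [← ENNReal.toReal_one]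
    exact ENNReal.toReal_mono hq (Fact.out : 1 ≤ q)
  have hqr0 : 0 < q.toReal := lt_of_lt_of_le one_pos hqr1
  have Hsum : ∀ F : Finset ℕ, ∑ m ∈ F, a m ^ q.toReal ≤ C ^ q.toReal := by
    intro F
    rcases eq_or_ne p ∞ with rfl | hp
    · -- q = 1
      have hq1 : q = 1 := by
        have h := ENNReal.HolderConjugate.inv_add_inv_eq_one ∞ q
        simp only [ENNReal.inv_top, zero_add] at h
        exact ENNReal.inv_eq_one.mp h
      subst hq1
      simp only [ENNReal.toReal_one, Real.rpow_one, hC, div_one]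
      have key := col_key ∞ 1 hpq hq N x hpos (fun _ => 1) (fun _ => zero_le_one) F
      simp only [one_mul, ENNReal.toReal_one, div_one, Real.rpow_one] at key
      refine key.trans ?_
      have hvnorm : ‖(∑ m ∈ F, lp.single ∞ m ((1:ℝ)) : lp (fun _ : ℕ => ℝ) ∞)‖ ≤ 1 := by
        rw [lp.norm_eq_ciSup]
        refine ciSup_le fun i => ?_
        have : (∑ m ∈ F, lp.single ∞ m ((1:ℝ)) : lp (fun _ : ℕ => ℝ) ∞) i
            = if i ∈ F then (1:ℝ) else 0 := by
          rw [lp.coeFn_sum, Finset.sum_apply]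
          simp [lp.single_apply, Pi.single_apply]
        rw [this]
        split <;> simp
      calc (N:ℝ) * ‖x‖ * ‖(∑ m ∈ F, lp.single ∞ m ((1:ℝ)) : lp (fun _ : ℕ => ℝ) ∞)‖
          ≤ (N:ℝ) * ‖x‖ * 1 :=
            mul_le_mul_of_nonneg_left hvnorm (by positivity)
        _ = (N:ℝ) * ‖x‖ := by ring
    · -- 1 < p < ∞, 1 < q < ∞
      have h := ENNReal.HolderConjugate.inv_add_inv_eq_one p q
      have hq1 : 1 < q := by
        by_contra hcon
        push_neg at hcon
        have hqinv : (1:ℝ≥0∞) ≤ q⁻¹ := ENNReal.one_le_inv.2 hcon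
        have hp0 : p⁻¹ = 1 - q⁻¹ := ENNReal.eq_sub_of_add_eq (by simpa using (ENNReal.HolderConjugate.ne_zero q p)) h
        rw [tsub_eq_zero_of_le hqinv] at hp0
        exact hp (by simpa using hp0)
      have hp1 : 1 < p := (ENNReal.HolderConjugate.one_le p q).lt_of_ne' (by
        rintro rfl
        rw [inv_one] at h
        have : q⁻¹ = 0 := (ENNReal.add_right_inj ENNReal.one_ne_top).1 (by simpa using h)
        exact hq (by simpa using this))
      have hpr1 : 1 < p.toReal := by
        rw [← ENNReal.toReal_one]
        exact (ENNReal.toReal_lt_toReal ENNReal.one_ne_top hp).2 hp1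
      have hpr0 : 0 < p.toReal := lt_trans one_pos hpr1
      have hsum : (p.toReal)⁻¹ + (q.toReal)⁻¹ = 1 := by
        have := congrArg ENNReal.toReal hpq
        rwa [ENNReal.toReal_add (by simp [(ENNReal.HolderConjugate.ne_zero p q)]) (by simp [(ENNReal.HolderConjugate.ne_zero q p)]),
          ENNReal.toReal_div, ENNReal.toReal_div, ENNReal.toReal_one, one_div, one_div] at this
      have hconj' : Real.HolderConjugate p.toReal q.toReal := Real.holderConjugate_iff.mpr ⟨hpr1, hsum⟩
      set b : ℕ → ℝ := fun m => a m ^ (q.toReal - 1) with hb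
      have hbnn : ∀ m, 0 ≤ b m := fun m => Real.rpow_nonneg (hann m) _
      have key := col_key p q hpq hq N x hpos b hbnn F
      set S : ℝ := ∑ m ∈ F, a m ^ q.toReal with hS
      have hSnn : 0 ≤ S := Finset.sum_nonneg fun m _ => Real.rpow_nonneg (hann m) _
      have hlhs : ∑ m ∈ F, b m * a m = S := by
        refine Finset.sum_congr rfl fun m _ => ?_
        rw [hb]
        have : a m ^ q.toReal = a m ^ (q.toReal - 1) * a m ^ (1:ℝ) := by
          rw [← Real.rpow_add' (hann m) (by rw [sub_add_cancel]; exact hqr0.ne'), sub_add_cancel]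
        rw [this, Real.rpow_one]
      have hvnorm : ‖(∑ m ∈ F, lp.single p m (b m) : lp (fun _ : ℕ => ℝ) p)‖ = S ^ (1 / p.toReal) := by
        have h1 := lp.norm_sum_single hpr0 (fun m : ℕ => b m) F
        have h2 : ∑ m ∈ F, ‖b m‖ ^ p.toReal = S := by
          refine Finset.sum_congr rfl fun m _ => ?_
          rw [Real.norm_eq_abs, abs_of_nonneg (hbnn m)]
          show (a m ^ (q.toReal - 1)) ^ p.toReal = a m ^ q.toReal
          rw [← Real.rpow_mul (hann m), hconj'.symm.sub_one_mul_conj]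
        rw [h2] at h1
        rw [← h1]
        rw [← Real.rpow_mul (norm_nonneg _), mul_one_div_cancel hpr0.ne', Real.rpow_one]
      rw [hlhs, hvnorm] at key
      -- key : S ≤ C * S ^ (1 / p.toReal)
      rcases eq_or_lt_of_le hSnn with hS0 | hS0
      · rw [← hS0]
        exact Real.rpow_nonneg hCnn _
      · have hstep : S ^ (1 / q.toReal) ≤ C := by
          have hSp : 0 < S ^ (1 / p.toReal) := Real.rpow_pos_of_pos hS0 _
          rw [← mul_le_mul_iff_of_pos_right hSp]
          calc S ^ (1 / q.toReal) * S ^ (1 / p.toReal)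
              = S := by
                rw [← Real.rpow_add hS0, one_div, one_div, add_comm, hsum, Real.rpow_one]
            _ ≤ C * S ^ (1 / p.toReal) := key
        calc S = (S ^ (1 / q.toReal)) ^ q.toReal := by
              rw [← Real.rpow_mul hSnn, one_div_mul_cancel hqr0.ne', Real.rpow_one]
          _ ≤ C ^ q.toReal :=
              Real.rpow_le_rpow (Real.rpow_nonneg hSnn _) hstep hqr0.le
  have hsummable : Summable fun m => a m ^ q.toReal :=
    summable_of_sum_le (fun m => Real.rpow_nonneg (hann m) _) Hsum
  have htsum : ∑' m, a m ^ q.toReal ≤ C ^ q.toReal := hsummable.tsum_le_of_sum_le Hsum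
  calc (∑' m, a m ^ q.toReal) ^ (1 / q.toReal)
      ≤ (C ^ q.toReal) ^ (1 / q.toReal) :=
        Real.rpow_le_rpow (tsum_nonneg fun m => Real.rpow_nonneg (hann m) _) htsum (by positivity)
    _ = C := by rw [← Real.rpow_mul hCnn, mul_one_div_cancel hqr0.ne', Real.rpow_one]
end

section
/- Let H be a finite-dimensional Hilbert space of dimension N with orthonormal identification ℓ₂-tensor, let A be a Hilbert–Schmidt operator of rank at most r on H, and let I = N^{-1/2} · (identity operator) viewed as a unit vector in the Hilbert–Schmidt inner product. Then for any scalar λ, (1 − r/N)|λ|² ≤ ‖A − λ N^{-1/2} Id‖²_{HS}. -/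
open scoped BigOperators

/-- If `A` is an operator of rank at most `r` on an `N`-dimensional Hilbert space
(realized as an `N × N` matrix) and `λ` is any scalar, then
`(1 - r/N)|λ|² ≤ ‖A - λ N^{-1/2}·Id‖²_{HS}`. -/
theorem rank_le_dist_to_identity {N : ℕ} (hN : 0 < N) (r : ℕ)
    (A : Matrix (Fin N) (Fin N) ℂ) (hr : A.rank ≤ r) (lam : ℂ) :
    (1 - (r : ℝ) / N) * ‖lam‖ ^ 2 ≤
      ∑ i, ∑ j, ‖A i j - (if i = j then lam / (Real.sqrt N : ℂ) else 0)‖ ^ 2 := by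
  classical
  set c : ℂ := lam / (Real.sqrt N : ℂ) with hc
  set M : Matrix (Fin N) (Fin N) ℂ := A - c • 1 with hM
  have hMent : ∀ i j, M i j = A i j - (if i = j then c else 0) := by
    intro i j
    by_cases h : i = j <;> simp [hM, Matrix.one_apply, h]
  -- kernel of A
  set T : EuclideanSpace ℂ (Fin N) →ₗ[ℂ] EuclideanSpace ℂ (Fin N) :=
    Matrix.toEuclideanLin A with hT
  set K : Submodule ℂ (EuclideanSpace ℂ (Fin N)) := LinearMap.ker T with hK
  have hrank : A.rank = Module.finrank ℂ (LinearMap.range T) := by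
    rw [hT, Matrix.toEuclideanLin_eq_toLin]
    exact Matrix.rank_eq_finrank_range_toLin A _ _
  have hRN : Module.finrank ℂ (LinearMap.range T) + Module.finrank ℂ K = N := by
    simpa [finrank_euclideanSpace_fin] using LinearMap.finrank_range_add_finrank_ker T
  set k : ℕ := Module.finrank ℂ K with hk
  -- orthonormal basis of K
  let b : OrthonormalBasis (Fin k) ℂ K := stdOrthonormalBasis ℂ K
  let v : Fin k → EuclideanSpace ℂ (Fin N) := fun i => (b i : EuclideanSpace ℂ (Fin N))
  have hon : Orthonormal ℂ v := by
    rw [orthonormal_iff_ite]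
    intro i j
    simp only [v, ← Submodule.coe_inner]
    exact orthonormal_iff_ite.mp b.orthonormal i j
  set e := WithLp.equiv 2 (Fin N → ℂ) with he
  -- rows of M conjugated
  let w : Fin N → EuclideanSpace ℂ (Fin N) := fun i =>
    e.symm (fun j => starRingEnd ℂ (M i j))
  have hinner : ∀ (i : Fin N) (x : EuclideanSpace ℂ (Fin N)),
      M.mulVec (e x) i = inner ℂ (w i) x := by
    intro i x
    simp [w, he, PiLp.inner_apply, Matrix.mulVec, dotProduct, RCLike.inner_apply,
      WithLp.equiv_symm_apply, PiLp.toLp_apply, mul_comm]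
  -- each basis vector of K is sent by M to -c • itself
  have hMv : ∀ i : Fin k, e.symm (M.mulVec (e (v i))) = -(c • v i) := by
    intro i
    have hker : A.mulVec (e (v i)) = 0 := by
      have h0 : T (v i) = 0 := (b i).2
      have := congrArg e h0
      simpa [hT, Matrix.toEuclideanLin_apply, he] using this
    have h1 : M.mulVec (e (v i)) = -(c • e (v i)) := by
      simp [hM, Matrix.sub_mulVec, hker, Matrix.smul_mulVec, Matrix.one_mulVec]
    rw [h1]
    rfl
  -- norm computation
  have hnorm : ∀ i : Fin k, ∑ j, ‖M.mulVec (e (v i)) j‖ ^ 2 = ‖c‖ ^ 2 := by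
    intro i
    have h1 : ∑ j, ‖M.mulVec (e (v i)) j‖ ^ 2 = ‖e.symm (M.mulVec (e (v i)))‖ ^ 2 := by
      rw [EuclideanSpace.norm_eq, Real.sq_sqrt (by positivity)]
      rfl
    rw [h1, hMv i, norm_neg, norm_smul, mul_pow]
    have : ‖v i‖ = 1 := hon.1 i
    simp [this]
  -- Bessel bound
  have key : (k : ℝ) * ‖c‖ ^ 2 ≤ ∑ i, ∑ j, ‖M i j‖ ^ 2 := by
    have h2 : (k : ℝ) * ‖c‖ ^ 2 = ∑ i : Fin k, ∑ j, ‖M.mulVec (e (v i)) j‖ ^ 2 := by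
      simp only [hnorm, Finset.sum_const, Finset.card_univ, Fintype.card_fin, nsmul_eq_mul]
    rw [h2, Finset.sum_comm]
    refine Finset.sum_le_sum fun j _ => ?_
    calc ∑ i : Fin k, ‖M.mulVec (e (v i)) j‖ ^ 2
        = ∑ i : Fin k, ‖(inner ℂ (w j) (v i) : ℂ)‖ ^ 2 := by
          simp only [hinner]
      _ = ∑ i : Fin k, ‖(inner ℂ (v i) (w j) : ℂ)‖ ^ 2 :=
          Finset.sum_congr rfl fun i _ => by rw [norm_inner_symm]
      _ ≤ ‖w j‖ ^ 2 := hon.sum_inner_products_le (w j)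
      _ = ∑ i, ‖M j i‖ ^ 2 := by
          rw [EuclideanSpace.norm_eq, Real.sq_sqrt (by positivity)]
          simp [w, he, WithLp.equiv_symm_apply, PiLp.toLp_apply]
  -- arithmetic
  have hcnorm : ‖c‖ ^ 2 = ‖lam‖ ^ 2 / N := by
    rw [hc, norm_div, div_pow]
    congr 1
    rw [Complex.norm_real, Real.norm_eq_abs, abs_of_nonneg (Real.sqrt_nonneg _),
      Real.sq_sqrt (Nat.cast_nonneg N)]
  have hent : ∑ i, ∑ j, ‖A i j - (if i = j then c else 0)‖ ^ 2
      = ∑ i, ∑ j, ‖M i j‖ ^ 2 := by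
    simp only [hMent]
  rw [hent]
  refine le_trans ?_ key
  rw [hcnorm]
  have hNr : (N : ℝ) - A.rank = k := by
    rw [← hrank] at hRN
    have : (A.rank : ℝ) + k = N := by exact_mod_cast congrArg (Nat.cast : ℕ → ℝ) hRN
    linarith
  have hrle : (A.rank : ℝ) ≤ r := by exact_mod_cast hr
  have hN' : (0 : ℝ) < N := by exact_mod_cast hN
  have hl : (0 : ℝ) ≤ ‖lam‖ ^ 2 := by positivity
  have h3 : 1 - (r : ℝ) / N ≤ (k : ℝ) * (N : ℝ)⁻¹ := by
    rw [div_eq_mul_inv, ← hNr]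
    have h4 : (1 : ℝ) = N * (N:ℝ)⁻¹ := by field_simp
    nlinarith [inv_pos.mpr hN']
  calc (1 - (r : ℝ) / N) * ‖lam‖ ^ 2 ≤ ((k : ℝ) * (N : ℝ)⁻¹) * ‖lam‖ ^ 2 := by nlinarith
    _ = (k : ℝ) * (‖lam‖ ^ 2 / N) := by ring
end

section
/- Let G be a finite connected k-regular graph with expanding constant h(G) ≥ h > 0, and let g : G → [0,∞) be a function with |supp(g)| ≤ |G|/2. Then h · ∑_{s ∈ G} g(s) ≤ ∑_{{s,t} ∈ E} |g(s) − g(t)|, where E is the set of (unoriented) edges of G. -/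
/-!
Co-area argument, discretised: peel off the constant layer `m · 1_S`, where `m` is the minimum
of `g` on a set `S` containing its support. Since `g - m · 1_S` vanishes off `S`, its
difference along any edge has the same sign as that of `m · 1_S`, so the edge variation splits
additively, and the layer contributes `2 m |∂S| ≥ 2 h m |S|`. The remainder is supported on
`S` minus a minimiser, so strong induction on `S` finishes the proof.
-/

open Finset

theorem abs_add_ite_sub_add_ite {α : Type*} [AddCommGroup α] [LinearOrder α]
    [IsOrderedAddMonoid α] {a b m : α} {p q : Prop} [Decidable p] [Decidable q]
    (ha : 0 ≤ a) (hb : 0 ≤ b) (hm : 0 ≤ m) (hpa : ¬p → a = 0) (hqb : ¬q → b = 0) :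
    |a + (if p then m else 0) - (b + if q then m else 0)| =
      |a - b| + |(if p then m else 0) - if q then m else 0| := by
  rw [add_sub_add_comm, abs_add_eq_add_abs_iff]
  by_cases hp : p <;> by_cases hq : q <;> simp_all [le_total]

theorem Finset.exists_eq_add_indicator_erase {ι : Type*} [DecidableEq ι] {g : ι → ℝ}
    {T : Finset ι} (hT : T.Nonempty) (hg : 0 ≤ g) (hgT : ∀ s ∉ T, g s = 0) :
    ∃ s₀ ∈ T, ∃ m : ℝ, 0 ≤ m ∧ ∃ g' : ι → ℝ, 0 ≤ g' ∧ (∀ s ∉ T.erase s₀, g' s = 0) ∧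
      g = fun s => g' s + if s ∈ T then m else 0 := by
  obtain ⟨s₀, hs₀, hmin⟩ := T.exists_min_image g hT
  refine ⟨s₀, hs₀, g s₀, hg s₀, fun s => g s - if s ∈ T then g s₀ else 0, fun s => ?_,
    fun s hs => ?_, by simp⟩
  · by_cases hs : s ∈ T
    · simpa [hs] using hmin s hs
    · simpa [hs] using hg s
  · by_cases hs₀' : s = s₀
    · simp [hs₀', hs₀]
    · have hsT : s ∉ T := fun hsT => hs (mem_erase.2 ⟨hs₀', hsT⟩)
      simp [hsT, hgT s hsT]

namespace SimpleGraph

variable {V : Type*} [Fintype V] (G : SimpleGraph V) [DecidableRel G.Adj]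

def edgeVariation (f : V → ℝ) : ℝ :=
  ∑ s, ∑ t, if G.Adj s t then |f s - f t| else 0

def edgeBoundarySize [DecidableEq V] (A : Finset V) : ℝ :=
  ∑ s ∈ A, ∑ t ∈ Aᶜ, if G.Adj s t then 1 else 0

theorem edgeVariation_add_indicator [DecidableEq V] {g : V → ℝ} {A : Finset V} {m : ℝ}
    (hg : 0 ≤ g) (hgA : ∀ s ∉ A, g s = 0) (hm : 0 ≤ m) :
    G.edgeVariation (fun s => g s + if s ∈ A then m else 0) =
      G.edgeVariation g + G.edgeVariation (fun s => if s ∈ A then m else 0) := by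
  simp only [edgeVariation, ← sum_add_distrib]
  refine sum_congr rfl fun s _ => sum_congr rfl fun t _ => ?_
  by_cases hst : G.Adj s t
  · simp only [hst, if_true]
    exact abs_add_ite_sub_add_ite (hg s) (hg t) hm (hgA s) (hgA t)
  · simp [hst]

theorem edgeVariation_indicator [DecidableEq V] (A : Finset V) {m : ℝ} (hm : 0 ≤ m) :
    G.edgeVariation (fun s => if s ∈ A then m else 0) = 2 * m * G.edgeBoundarySize A := by
  let cut : V → V → ℝ := fun s t =>
    if s ∈ A then if t ∈ Aᶜ then if G.Adj s t then 1 else 0 else 0 else 0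
  have hcut : ∑ s, ∑ t, cut s t = G.edgeBoundarySize A := by
    simp only [cut, edgeBoundarySize, sum_ite_irrel, sum_const_zero, sum_ite_mem, univ_inter]
  have hpair : ∀ s t,
      (if G.Adj s t then |(if s ∈ A then m else 0) - if t ∈ A then m else 0| else 0) =
        m * (cut s t + cut t s) := by
    intro s t
    by_cases hst : G.Adj s t <;> by_cases hs : s ∈ A <;> by_cases ht : t ∈ A <;>
      simp [cut, hst, hs, ht, abs_of_nonneg hm, G.adj_comm]
  simp only [edgeVariation, hpair, ← mul_sum, sum_add_distrib]
  rw [sum_comm (f := fun s t => cut t s), hcut]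
  ring

theorem mul_sum_le_half_edgeVariation [DecidableEq V] {h : ℝ} {S : Finset V}
    (hexp : ∀ A ⊆ S, h * #A ≤ G.edgeBoundarySize A) {g : V → ℝ} (hg : 0 ≤ g)
    (hgS : ∀ s ∉ S, g s = 0) :
    h * ∑ s, g s ≤ 1 / 2 * G.edgeVariation g := by
  induction S using Finset.strongInduction generalizing g with
  | H S ih =>
  rcases S.eq_empty_or_nonempty with rfl | hS
  · have hg0 : g = 0 := funext fun s => hgS s (notMem_empty s)
    simp [hg0, edgeVariation]
  obtain ⟨s₀, hs₀, m, hm, g', hg', hg'S, rfl⟩ := S.exists_eq_add_indicator_erase hS hg hgS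
  have ih' := ih (S.erase s₀) (erase_ssubset hs₀)
    (fun A hA => hexp A (hA.trans (erase_subset _ _))) hg' hg'S
  have hlayer := mul_le_mul_of_nonneg_left (hexp S subset_rfl) hm
  rw [edgeVariation_add_indicator G hg' (fun s hs => hg'S s (hs ∘ mem_of_mem_erase)) hm,
    edgeVariation_indicator G S hm]
  simp only [sum_add_distrib, sum_ite_mem, univ_inter, sum_const, nsmul_eq_mul]
  linarith

end SimpleGraph

theorem coarea_expander_general {V : Type} [Fintype V] [DecidableEq V]
    (G : SimpleGraph V) [DecidableRel G.Adj] (h : ℝ)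
    (hexp : ∀ A : Finset V, 2 * A.card ≤ Fintype.card V →
      h * A.card ≤ ∑ s ∈ A, ∑ t ∈ Aᶜ, (if G.Adj s t then (1 : ℝ) else 0))
    (g : V → ℝ) (hg : ∀ s, 0 ≤ g s)
    (hsupp : 2 * (univ.filter fun s => g s ≠ 0).card ≤ Fintype.card V) :
    h * ∑ s, g s ≤ (1 / 2) * ∑ s, ∑ t, (if G.Adj s t then |g s - g t| else 0) :=
  G.mul_sum_le_half_edgeVariation
    (fun A hA => hexp A ((Nat.mul_le_mul_left 2 (card_le_card hA)).trans hsupp)) hg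
    (fun s hs => by simpa using hs)

/-- Co-area inequality for expanders: if `G` is a connected `k`-regular graph with
expanding constant at least `h` and `g : G → [0,∞)` is supported on at most half of the
vertices, then `h ∑_s g(s) ≤ ∑_{edges {s,t}} |g(s) − g(t)|` (the sum over unoriented
edges being written as half the sum over ordered adjacent pairs). -/
theorem coarea_expander {V : Type} [Fintype V] [DecidableEq V]
    (G : SimpleGraph V) [DecidableRel G.Adj] (k : ℕ) (h : ℝ) (hh : 0 < h)
    (hconn : G.Connected) (hreg : G.IsRegularOfDegree k)
    (hexp : ∀ A : Finset V, 2 * A.card ≤ Fintype.card V →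
      h * A.card ≤ ∑ s ∈ A, ∑ t ∈ Aᶜ, (if G.Adj s t then (1 : ℝ) else 0))
    (g : V → ℝ) (hg : ∀ s, 0 ≤ g s)
    (hsupp : 2 * (univ.filter fun s => g s ≠ 0).card ≤ Fintype.card V) :
    h * ∑ s, g s ≤ (1 / 2) * ∑ s, ∑ t, (if G.Adj s t then |g s - g t| else 0) :=
  coarea_expander_general G h hexp g hg hsupp
end

section
/- Let G be a finite connected k-regular graph with expanding constant at least h > 0 ((k,h)-expander). For any map f : G → ℓ₁ we have (1/|G|) ∑_{s∈G} ‖f(s) − m‖₁ ≤ 2(k/h) Lip(f), where m = |G|^{-1} ∑_{s∈G} f(s) is the mean of f and Lip(f) = max{‖f(s)−f(t)‖₁ : s,t adjacent}. -/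
open Finset

set_option maxHeartbeats 1000000

private lemma key_coarea {V : Type} [Fintype V] [DecidableEq V] (G : SimpleGraph V)
    [DecidableRel G.Adj] (h : ℝ) (hh : 0 < h)
    (hexp : ∀ A : Finset V, 2 * A.card ≤ Fintype.card V →
      h * A.card ≤ ∑ s ∈ A, ∑ t ∈ Aᶜ, (if G.Adj s t then (1 : ℝ) else 0))
    (g : V → ℝ) :
    ∑ s, ∑ t, |g s - g t| ≤
      ((Fintype.card V : ℝ) / h) * ∑ s, ∑ t, (if G.Adj s t then |g s - g t| else 0) := by
  rcases isEmpty_or_nonempty V with hV | hV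
  · simp
  set n := Fintype.card V with hn
  have hn1 : 1 ≤ n := Fintype.card_pos
  set e := Fintype.equivFin V with he
  set σ := Tuple.sort (g ∘ e.symm) with hσ
  set τ : Fin n ≃ V := σ.trans e.symm with hτ
  have hmono : Monotone (g ∘ τ) := Tuple.monotone_sort (g ∘ e.symm)
  set r : V → ℕ := fun s => (τ.symm s : ℕ) with hrdef
  have hr : ∀ s, r s < n := fun s => (τ.symm s).isLt
  set Gm : ℕ → ℝ := fun i => g (τ ⟨min i (n-1), by omega⟩) with hGmdef
  have hGr : ∀ s, Gm (r s) = g s := by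
    intro s
    have h1 : min (r s) (n-1) = r s := by have := hr s; omega
    simp only [hGmdef]
    congr 1
    have : (⟨min (r s) (n-1), by omega⟩ : Fin n) = τ.symm s := by
      apply Fin.ext; exact h1
    rw [this, Equiv.apply_symm_apply]
  have hGm : Monotone Gm := by
    intro i j hij
    exact hmono (by simp [Fin.le_def]; omega)
  set d : ℕ → ℝ := fun l => Gm (l+1) - Gm l with hddef
  have hd : ∀ l, 0 ≤ d l := fun l => sub_nonneg.2 (hGm (Nat.le_succ l))
  have htel : ∀ a b : ℕ, a ≤ b → Gm b - Gm a = ∑ l ∈ Ico a b, d l := by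
    intro a b hab
    rw [Finset.sum_Ico_eq_sub _ hab, Finset.sum_range_sub, Finset.sum_range_sub]
    ring
  set χ : V → V → ℕ → ℝ := fun s t l => if r s ≤ l ∧ l < r t then 1 else 0 with hχdef
  have hkey1 : ∀ s t, r s ≤ r t →
      (∑ l ∈ range (n-1), d l * (χ s t l + χ t s l)) = g t - g s := by
    intro s t hst
    have hz : ∀ l, χ t s l = 0 := by
      intro l; simp only [hχdef, ite_eq_right_iff]; intro ⟨h1, h2⟩; omega
    have hstep : ∀ l ∈ range (n-1), d l * (χ s t l + χ t s l)
        = if l ∈ Ico (r s) (r t) then d l else 0 := by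
      intro l _
      rw [hz]
      simp only [hχdef, mem_Ico, add_zero]
      split <;> simp
    rw [Finset.sum_congr rfl hstep, Finset.sum_ite_mem]
    have hsub : Ico (r s) (r t) ⊆ range (n-1) := by
      intro l hl
      simp only [mem_Ico, mem_range] at *
      have := hr t; omega
    rw [Finset.inter_eq_right.2 hsub, ← htel _ _ hst, hGr, hGr]
  have hid : ∀ s t, |g s - g t| = ∑ l ∈ range (n-1), d l * (χ s t l + χ t s l) := by
    intro s t
    rcases le_total (r s) (r t) with hst | hst
    · rw [hkey1 s t hst, abs_sub_comm, abs_of_nonneg]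
      rw [← hGr s, ← hGr t]
      exact sub_nonneg.2 (hGm hst)
    · have := hkey1 t s hst
      simp_rw [add_comm (χ s t _)]
      rw [this, abs_of_nonneg]
      rw [← hGr s, ← hGr t]
      exact sub_nonneg.2 (hGm hst)
  have hcard : ∀ l, l < n → (univ.filter (fun s => r s ≤ l)).card = l + 1 := by
    intro l hl
    have h1 : (univ.filter (fun s => r s ≤ l)).card = ∑ s : V, if r s ≤ l then 1 else 0 := by
      rw [Finset.sum_boole, Nat.cast_id]
    rw [h1, ← Equiv.sum_comp τ (fun s => if r s ≤ l then (1:ℕ) else 0)]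
    simp only [hrdef, Equiv.symm_apply_apply]
    rw [Fin.sum_univ_eq_sum_range (fun j => if j ≤ l then (1:ℕ) else 0) n]
    rw [Finset.sum_boole, Nat.cast_id]
    have h2 : (range n).filter (fun j => j ≤ l) = range (l+1) := by
      ext j; simp only [mem_filter, mem_range]; omega
    rw [h2, card_range]
  set A : ℕ → Finset V := fun l => univ.filter (fun s => r s ≤ l) with hAdef
  have hcardc : ∀ l, l < n → ((A l)ᶜ).card = n - (l+1) := by
    intro l hl
    rw [Finset.card_compl, hcard l hl, hn]
  set B : ℕ → ℝ := fun l => ∑ s ∈ A l, ∑ t ∈ (A l)ᶜ, (if G.Adj s t then (1:ℝ) else 0)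
    with hBdef
  -- pointwise rewriting of adjacency-restricted sums
  have hswap : ∀ (F : V → V → ℕ → ℝ),
      (∑ s, ∑ t, ∑ l ∈ range (n-1), F s t l) = ∑ l ∈ range (n-1), ∑ s, ∑ t, F s t l := by
    intro F
    rw [Finset.sum_congr rfl (fun s _ => Finset.sum_comm), Finset.sum_comm]
  -- evaluate the χ double sum
  have hSsum : ∀ l, l < n → (∑ s, ∑ t, χ s t l)
      = (((l+1 : ℕ) : ℝ)) * (((n - (l+1) : ℕ) : ℝ)) := by
    intro l hl
    have hfac : ∀ s t : V, χ s t l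
        = (if r s ≤ l then (1:ℝ) else 0) * (if l < r t then (1:ℝ) else 0) := by
      intro s t
      simp only [hχdef]
      by_cases h1 : r s ≤ l <;> by_cases h2 : l < r t <;> simp [h1, h2]
    simp_rw [hfac]
    rw [← Finset.sum_mul_sum]
    congr 1
    · rw [Finset.sum_boole, hcard l hl]
    · rw [Finset.sum_boole]
      congr 2
      rw [← hcardc l hl]
      congr 1
      ext t
      simp [hAdef, not_le]
  have hSsum2 : ∀ l, l < n → (∑ s, ∑ t, (χ s t l + χ t s l))
      = 2 * ((((l+1 : ℕ) : ℝ)) * (((n - (l+1) : ℕ) : ℝ))) := by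
    intro l hl
    simp_rw [Finset.sum_add_distrib]
    rw [Finset.sum_comm (f := fun s t => χ t s l), hSsum l hl]
    ring
  -- evaluate the adjacency-restricted χ double sum
  have hAdj : ∀ l, l < n → (∑ s, ∑ t, (if G.Adj s t then χ s t l + χ t s l else 0))
      = 2 * B l := by
    intro l hl
    have hsplit : ∀ s t : V, (if G.Adj s t then χ s t l + χ t s l else 0)
        = (if G.Adj s t then χ s t l else 0) + (if G.Adj s t then χ t s l else 0) := by
      intro s t; split <;> simp
    simp_rw [hsplit, Finset.sum_add_distrib]
    have hsym : (∑ s, ∑ t, (if G.Adj s t then χ t s l else 0))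
        = ∑ s, ∑ t, (if G.Adj s t then χ s t l else 0) := by
      rw [Finset.sum_comm]
      exact Finset.sum_congr rfl fun s _ => Finset.sum_congr rfl fun t _ =>
        if_congr (G.adj_comm t s) rfl rfl
    rw [hsym]
    have hBeq : (∑ s, ∑ t, (if G.Adj s t then χ s t l else 0)) = B l := by
      rw [hBdef]
      simp only [hAdef]
      rw [Finset.sum_filter]
      refine Finset.sum_congr rfl fun s _ => ?_
      rw [Finset.compl_filter, Finset.sum_filter]
      by_cases h1 : r s ≤ l
      · rw [if_pos h1]
        refine Finset.sum_congr rfl fun t _ => ?_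
        by_cases h2 : r t ≤ l <;> by_cases h3 : G.Adj s t <;>
          simp [hχdef, h1, h2, h3] <;> omega
      · rw [if_neg h1]
        rw [Finset.sum_eq_zero]
        intro t _
        by_cases h3 : G.Adj s t <;> simp [hχdef, h1, h3]
    rw [hBeq]; ring
  -- expansion bound per level
  have hExp : ∀ l ∈ range (n-1),
      (2:ℝ) * ((((l+1 : ℕ) : ℝ)) * (((n - (l+1) : ℕ) : ℝ))) ≤ ((n:ℝ)/h) * (2 * B l) := by
    intro l hlr
    have hl : l + 1 < n := by have := Finset.mem_range.mp hlr; omega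
    set a : ℝ := ((l+1 : ℕ) : ℝ) with hadef
    set b : ℝ := ((n - (l+1) : ℕ) : ℝ) with hbdef
    have ha0 : 0 ≤ a := Nat.cast_nonneg _
    have hb0 : 0 ≤ b := Nat.cast_nonneg _
    have han : a ≤ (n:ℝ) := by rw [hadef]; exact_mod_cast Nat.le_of_lt hl
    have hbn : b ≤ (n:ℝ) := by rw [hbdef]; exact_mod_cast Nat.sub_le n (l+1)
    rw [div_mul_eq_mul_div, le_div_iff₀ hh]
    rcases le_or_gt (2*(l+1)) n with hc | hc
    · have hB := hexp (A l) (by rw [hcard l (by omega)]; exact hc)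
      rw [hcard l (by omega)] at hB
      have hB' : h * a ≤ B l := by simp only [hadef, hBdef]; exact_mod_cast hB
      have hBpos : 0 ≤ B l := le_trans (by positivity) hB'
      have f1 : 2*b*(h*a) ≤ 2*b*(B l) := mul_le_mul_of_nonneg_left hB' (by positivity)
      have f2 : 2*b*(B l) ≤ 2*(n:ℝ)*(B l) :=
        mul_le_mul_of_nonneg_right (by linarith) hBpos
      calc 2*(a*b)*h = 2*b*(h*a) := by ring
        _ ≤ 2*(n:ℝ)*(B l) := le_trans f1 f2
        _ = (n:ℝ)*(2*B l) := by ring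
    · have hcc : 2 * ((A l)ᶜ).card ≤ Fintype.card V := by
        rw [hcardc l (by omega)]; omega
      have hB := hexp ((A l)ᶜ) hcc
      rw [compl_compl, hcardc l (by omega)] at hB
      have hBsym : (∑ s ∈ (A l)ᶜ, ∑ t ∈ A l, (if G.Adj s t then (1:ℝ) else 0)) = B l := by
        simp only [hBdef]
        rw [Finset.sum_comm]
        exact Finset.sum_congr rfl fun s _ => Finset.sum_congr rfl fun t _ =>
          if_congr (G.adj_comm t s) rfl rfl
      rw [hBsym] at hB
      have hB' : h * b ≤ B l := by simp only [hbdef]; exact_mod_cast hB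
      have hBpos : 0 ≤ B l := le_trans (by positivity) hB'
      have f1 : 2*a*(h*b) ≤ 2*a*(B l) := mul_le_mul_of_nonneg_left hB' (by positivity)
      have f2 : 2*a*(B l) ≤ 2*(n:ℝ)*(B l) :=
        mul_le_mul_of_nonneg_right (by linarith) hBpos
      calc 2*(a*b)*h = 2*a*(h*b) := by ring
        _ ≤ 2*(n:ℝ)*(B l) := le_trans f1 f2
        _ = (n:ℝ)*(2*B l) := by ring
  -- put it together
  calc ∑ s, ∑ t, |g s - g t|
      = ∑ l ∈ range (n-1), d l * (∑ s, ∑ t, (χ s t l + χ t s l)) := by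
        simp_rw [hid]
        rw [hswap (fun s t l => d l * (χ s t l + χ t s l))]
        simp_rw [← Finset.mul_sum]
    _ ≤ ∑ l ∈ range (n-1), d l * (((n:ℝ)/h) * (2 * B l)) := by
        refine Finset.sum_le_sum fun l hlr => ?_
        have hl : l < n := by simp only [mem_range] at hlr; omega
        rw [hSsum2 l hl]
        exact mul_le_mul_of_nonneg_left (hExp l hlr) (hd l)
    _ = ((n:ℝ)/h) * ∑ s, ∑ t, (if G.Adj s t then |g s - g t| else 0) := by
        have hptw : ∀ s t : V, (if G.Adj s t then |g s - g t| else 0)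
            = ∑ l ∈ range (n-1), d l * (if G.Adj s t then χ s t l + χ t s l else 0) := by
          intro s t
          by_cases h3 : G.Adj s t
          · simp only [h3, if_true]; exact hid s t
          · simp [h3]
        simp_rw [hptw]
        rw [hswap (fun s t l => d l * (if G.Adj s t then χ s t l + χ t s l else 0))]
        simp_rw [← Finset.mul_sum]
        rw [Finset.mul_sum]
        refine Finset.sum_congr rfl fun l hlr => ?_
        have hl : l < n := by have := Finset.mem_range.mp hlr; omega
        rw [hAdj l hl]; ring

/-- For a `(k,h)`-expander `G` and any map `f : G → ℓ₁`,
`(1/|G|) ∑_s ‖f(s) − m‖₁ ≤ 2(k/h) Lip(f)`, where `m` is the mean of `f`. -/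
theorem expander_l1_concentration {V : Type} [Fintype V] [DecidableEq V]
    (G : SimpleGraph V) [DecidableRel G.Adj] (k : ℕ) (h : ℝ) (hh : 0 < h)
    (hconn : G.Connected) (hreg : G.IsRegularOfDegree k)
    (hexp : ∀ A : Finset V, 2 * A.card ≤ Fintype.card V →
      h * A.card ≤ ∑ s ∈ A, ∑ t ∈ Aᶜ, (if G.Adj s t then (1 : ℝ) else 0))
    (f : V → lp (fun _ : ℕ => ℂ) 1) (L : ℝ)
    (hL : ∀ s t, G.Adj s t → ‖f s - f t‖ ≤ L) :
    (Fintype.card V : ℝ)⁻¹ * ∑ s, ‖f s - (Fintype.card V : ℝ)⁻¹ • ∑ t, f t‖ ≤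
      2 * ((k : ℝ) / h) * L := by
  have hne : Nonempty V := hconn.nonempty
  set n := Fintype.card V with hn
  have hn0 : 0 < n := Fintype.card_pos
  have hnR : (0:ℝ) < n := by exact_mod_cast hn0
  set m : lp (fun _ : ℕ => ℂ) 1 := (n:ℝ)⁻¹ • ∑ t, f t with hm
  -- norm of lp 1 elements as tsum
  have hnorm : ∀ x : lp (fun _ : ℕ => ℂ) 1, ‖x‖ = ∑' j, ‖(x : ∀ _ : ℕ, ℂ) j‖ := by
    intro x
    rw [lp.norm_eq_tsum_rpow (by norm_num) x]
    norm_num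
  have hsumm : ∀ x : lp (fun _ : ℕ => ℂ) 1, Summable (fun j => ‖(x : ∀ _ : ℕ, ℂ) j‖) := by
    intro x
    have h2 := (lp.memℓp x).summable (p := 1) (by norm_num)
    simpa using h2
  -- Step A : centering at the mean
  have hA : ∑ s, ‖f s - m‖ ≤ (n:ℝ)⁻¹ * ∑ s, ∑ t, ‖f s - f t‖ := by
    rw [Finset.mul_sum]
    refine Finset.sum_le_sum fun s _ => ?_
    have h1 : f s - m = (n:ℝ)⁻¹ • ∑ t, (f s - f t) := by
      rw [Finset.sum_sub_distrib, smul_sub, Finset.sum_const, Finset.card_univ,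
        ← Nat.cast_smul_eq_nsmul ℝ, smul_smul, inv_mul_cancel₀ (ne_of_gt hnR), one_smul, hm, hn]
    rw [h1, norm_smul, norm_inv, Real.norm_natCast]
    exact mul_le_mul_of_nonneg_left (norm_sum_le _ _) (by positivity)
  -- coordinate functions
  set F1 : ℕ → V → ℝ := fun j s => ((f s : ∀ _ : ℕ, ℂ) j).re with hF1
  set F2 : ℕ → V → ℝ := fun j s => ((f s : ∀ _ : ℕ, ℂ) j).im with hF2
  set w : ℕ → V → V → ℝ := fun j s t => |F1 j s - F1 j t| + |F2 j s - F2 j t| with hw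
  have hcoord : ∀ (s t : V) (j : ℕ),
      ((f s - f t : lp (fun _ : ℕ => ℂ) 1) : ∀ _ : ℕ, ℂ) j = (f s : ∀ _ : ℕ, ℂ) j - (f t : ∀ _ : ℕ, ℂ) j := by
    intro s t j
    rw [lp.coeFn_sub]
    rfl
  have hwle : ∀ (s t : V) (j : ℕ),
      ‖((f s - f t : lp (fun _ : ℕ => ℂ) 1) : ∀ _ : ℕ, ℂ) j‖ ≤ w j s t := by
    intro s t j
    rw [hcoord]
    calc ‖(f s : ∀ _ : ℕ, ℂ) j - (f t : ∀ _ : ℕ, ℂ) j‖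
        ≤ |((f s : ∀ _ : ℕ, ℂ) j - (f t : ∀ _ : ℕ, ℂ) j).re|
          + |((f s : ∀ _ : ℕ, ℂ) j - (f t : ∀ _ : ℕ, ℂ) j).im| :=
          Complex.norm_le_abs_re_add_abs_im _
      _ = w j s t := by rw [hw]; simp [Complex.sub_re, Complex.sub_im, hF1, hF2]
  have hwge : ∀ (s t : V) (j : ℕ),
      w j s t ≤ 2 * ‖((f s - f t : lp (fun _ : ℕ => ℂ) 1) : ∀ _ : ℕ, ℂ) j‖ := by
    intro s t j
    rw [hcoord, hw]
    have h1 := Complex.abs_re_le_norm ((f s : ∀ _ : ℕ, ℂ) j - (f t : ∀ _ : ℕ, ℂ) j)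
    have h2 := Complex.abs_im_le_norm ((f s : ∀ _ : ℕ, ℂ) j - (f t : ∀ _ : ℕ, ℂ) j)
    simp only [Complex.sub_re, Complex.sub_im, hF1, hF2] at *
    linarith
  have hwsum : ∀ s t : V, Summable (fun j => w j s t) := by
    intro s t
    refine Summable.of_nonneg_of_le (fun j => by positivity) (fun j => hwge s t j) ?_
    exact (hsumm (f s - f t)).mul_left 2
  have hpair : ∀ s t : V, ‖f s - f t‖ ≤ ∑' j, w j s t := by
    intro s t
    rw [hnorm (f s - f t)]
    exact Summable.tsum_le_tsum (hwle s t) (hsumm (f s - f t)) (hwsum s t)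
  have hpair2 : ∀ s t : V, ∑' j, w j s t ≤ 2 * ‖f s - f t‖ := by
    intro s t
    rw [hnorm (f s - f t), ← tsum_mul_left]
    exact Summable.tsum_le_tsum (hwge s t) (hwsum s t) ((hsumm (f s - f t)).mul_left 2)
  -- adjacency-restricted sums
  have hwsum' : ∀ (s t : V), Summable (fun j => if G.Adj s t then w j s t else 0) := by
    intro s t
    by_cases h3 : G.Adj s t
    · simp only [h3, if_true]; exact hwsum s t
    · simp only [h3, if_false]; exact summable_zero
  -- Step B : swap tsum and finite sums, apply key lemma per coordinate
  have hB : ∑ s, ∑ t, ‖f s - f t‖ ≤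
      ((n:ℝ)/h) * ∑ s, ∑ t, (if G.Adj s t then 2 * ‖f s - f t‖ else 0) := by
    have step1 : ∑ s, ∑ t, ‖f s - f t‖ ≤ ∑ s, ∑ t, ∑' j, w j s t :=
      Finset.sum_le_sum fun s _ => Finset.sum_le_sum fun t _ => hpair s t
    have step2 : (∑ s : V, ∑ t : V, ∑' j, w j s t) = ∑' j, ∑ s : V, ∑ t : V, w j s t := by
      rw [show (∑ s : V, ∑ t : V, ∑' j, w j s t) = ∑ s : V, ∑' j, ∑ t : V, w j s t from
        Finset.sum_congr rfl fun s _ => (Summable.tsum_finsetSum (fun t _ => hwsum s t)).symm]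
      exact (Summable.tsum_finsetSum (fun s _ => summable_sum (fun t _ => hwsum s t))).symm
    -- per-coordinate application of the key lemma
    have step3 : ∀ j : ℕ, (∑ s : V, ∑ t : V, w j s t)
        ≤ ((n:ℝ)/h) * ∑ s : V, ∑ t : V, (if G.Adj s t then w j s t else 0) := by
      intro j
      have k1 := key_coarea G h hh hexp (F1 j)
      have k2 := key_coarea G h hh hexp (F2 j)
      have hsplit : (∑ s : V, ∑ t : V, w j s t)
          = (∑ s : V, ∑ t : V, |F1 j s - F1 j t|) + ∑ s : V, ∑ t : V, |F2 j s - F2 j t| := by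
        simp_rw [hw, Finset.sum_add_distrib]
      have hsplit2 : (∑ s : V, ∑ t : V, (if G.Adj s t then w j s t else 0))
          = (∑ s : V, ∑ t : V, (if G.Adj s t then |F1 j s - F1 j t| else 0))
            + ∑ s : V, ∑ t : V, (if G.Adj s t then |F2 j s - F2 j t| else 0) := by
        simp_rw [hw]
        simp only [show ∀ (s t : V), (if G.Adj s t then |F1 j s - F1 j t| + |F2 j s - F2 j t| else 0)
            = (if G.Adj s t then |F1 j s - F1 j t| else 0)
              + (if G.Adj s t then |F2 j s - F2 j t| else 0) from
          fun s t => by split <;> simp]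
        simp_rw [Finset.sum_add_distrib]
      rw [hsplit, hsplit2, mul_add]
      exact add_le_add k1 k2
    -- adjacency-restricted tsum swap
    have step4 : (∑' j, ∑ s : V, ∑ t : V, (if G.Adj s t then w j s t else 0))
        = ∑ s : V, ∑ t : V, (if G.Adj s t then (∑' j, w j s t) else 0) := by
      rw [Summable.tsum_finsetSum (fun s _ => summable_sum (fun t _ => hwsum' s t))]
      refine Finset.sum_congr rfl fun s _ => ?_
      rw [Summable.tsum_finsetSum (fun t _ => hwsum' s t)]
      refine Finset.sum_congr rfl fun t _ => ?_
      by_cases h3 : G.Adj s t <;> simp [h3]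
    have hsum3 : Summable fun j => ∑ s : V, ∑ t : V, w j s t :=
      summable_sum (fun s _ => summable_sum (fun t _ => hwsum s t))
    have hsum4 : Summable fun j => ∑ s : V, ∑ t : V, (if G.Adj s t then w j s t else 0) :=
      summable_sum (fun s _ => summable_sum (fun t _ => hwsum' s t))
    calc ∑ s, ∑ t, ‖f s - f t‖ ≤ ∑' j, ∑ s : V, ∑ t : V, w j s t := by
          rw [← step2]; exact step1
      _ ≤ ∑' j, ((n:ℝ)/h) * ∑ s : V, ∑ t : V, (if G.Adj s t then w j s t else 0) :=
          Summable.tsum_le_tsum step3 hsum3 (hsum4.mul_left _)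
      _ = ((n:ℝ)/h) * ∑ s : V, ∑ t : V, (if G.Adj s t then (∑' j, w j s t) else 0) := by
          rw [tsum_mul_left, step4]
      _ ≤ ((n:ℝ)/h) * ∑ s, ∑ t, (if G.Adj s t then 2 * ‖f s - f t‖ else 0) := by
          refine mul_le_mul_of_nonneg_left ?_ (by positivity)
          refine Finset.sum_le_sum fun s _ => Finset.sum_le_sum fun t _ => ?_
          by_cases h3 : G.Adj s t
          · simpa [h3] using hpair2 s t
          · simp [h3]
  -- Step C : Lipschitz bound on the edge sum
  have hC : (∑ s : V, ∑ t : V, (if G.Adj s t then 2 * ‖f s - f t‖ else 0))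
      ≤ 2 * L * (n * k) := by
    calc (∑ s : V, ∑ t : V, (if G.Adj s t then 2 * ‖f s - f t‖ else 0))
        ≤ ∑ s : V, ∑ t : V, (if G.Adj s t then 2 * L else 0) := by
          refine Finset.sum_le_sum fun s _ => Finset.sum_le_sum fun t _ => ?_
          by_cases h3 : G.Adj s t
          · simp only [h3, if_true]
            linarith [hL s t h3]
          · simp [h3]
      _ = 2 * L * (n * k) := by
          have hdeg : ∀ s : V, (∑ t : V, (if G.Adj s t then (1:ℝ) else 0)) = (k:ℝ) := by
            intro s
            rw [Finset.sum_boole]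
            congr 1
            rw [← SimpleGraph.neighborFinset_eq_filter]
            exact hreg s
          have : ∀ s : V, (∑ t : V, (if G.Adj s t then 2 * L else 0))
              = 2 * L * ∑ t : V, (if G.Adj s t then (1:ℝ) else 0) := by
            intro s
            rw [Finset.mul_sum]
            exact Finset.sum_congr rfl fun t _ => by split <;> simp
          simp_rw [this, hdeg]
          rw [Finset.sum_const, Finset.card_univ, ← hn, nsmul_eq_mul]
          ring
  -- assemble
  have hfinal : ∑ s, ‖f s - m‖ ≤ (n:ℝ)⁻¹ * (((n:ℝ)/h) * (2 * L * (n * k))) := by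
    refine le_trans hA ?_
    refine mul_le_mul_of_nonneg_left (le_trans hB ?_) (by positivity)
    exact mul_le_mul_of_nonneg_left hC (by positivity)
  calc (n:ℝ)⁻¹ * ∑ s, ‖f s - m‖
      ≤ (n:ℝ)⁻¹ * ((n:ℝ)⁻¹ * (((n:ℝ)/h) * (2 * L * (n * k)))) :=
        mul_le_mul_of_nonneg_left hfinal (by positivity)
    _ = 2 * ((k : ℝ) / h) * L := by
        field_simp
end

section
/- Let G be a (k,h)-expander and f : G → [0,∞) a function such that |{s ∈ G : f(s) ≤ R₀}| ≥ |G|/2. Then (1/|G|) ∑_{s∈G} f(s) ≤ R₀ + (k/(2h)) Lip(f). -/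
open Finset
open scoped Classical

private lemma aux_pointwise (M m a b : ℝ) (hm : m ≤ M)
    (ha : a ≤ M) (hb : b ≤ M) (ha' : a < M → a ≤ m) (hb' : b < M → b ≤ m) :
    max (min a m - min b m) 0 + (M - m) * (if M ≤ a ∧ ¬ M ≤ b then 1 else 0)
      ≤ max (a - b) 0 := by
  rcases le_or_gt M a with hMa | hMa <;> rcases le_or_gt M b with hMb | hMb
  · have haM : a = M := le_antisymm ha hMa
    have hbM : b = M := le_antisymm hb hMb
    simp [haM, hbM]
  · have haM : a = M := le_antisymm ha hMa
    have hbm : b ≤ m := hb' hMb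
    have h1 : min a m = m := by rw [haM]; exact min_eq_right hm
    have h2 : min b m = b := min_eq_left hbm
    rw [h1, h2, max_eq_left (by linarith), max_eq_left (by linarith),
      if_pos ⟨hMa, not_le.2 hMb⟩]
    linarith
  · have ham : a ≤ m := ha' hMa
    have hbM : b = M := le_antisymm hb hMb
    have h2 : min b m = m := by rw [hbM]; exact min_eq_right hm
    rw [h2, min_eq_left ham, max_eq_right (by linarith),
      if_neg (by simp [not_le.2 hMa])]
    simpa using le_max_right (a - b) 0
  · have ham : a ≤ m := ha' hMa
    have hbm : b ≤ m := hb' hMb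
    rw [min_eq_left ham, min_eq_left hbm, if_neg (by simp [not_le.2 hMa])]
    linarith

private lemma coarea {V : Type} [Fintype V] [DecidableEq V]
    (G : SimpleGraph V) [DecidableRel G.Adj] (h : ℝ)
    (hexp : ∀ A : Finset V, 2 * A.card ≤ Fintype.card V →
      h * A.card ≤ ∑ s ∈ A, ∑ t ∈ Aᶜ, (if G.Adj s t then (1 : ℝ) else 0)) :
    ∀ n : ℕ, ∀ g : V → ℝ, (∀ s, 0 ≤ g s) →
      2 * (univ.filter fun s => 0 < g s).card ≤ Fintype.card V →
      ((univ.image g).filter fun v => 0 < v).card ≤ n →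
      h * ∑ s, g s ≤ ∑ s, ∑ t, (if G.Adj s t then max (g s - g t) 0 else 0) := by
  intro n
  induction n with
  | zero =>
    intro g hg hsupp hcard
    have hz : ∀ s, g s = 0 := by
      intro s
      by_contra hs
      have h0 : 0 < g s := lt_of_le_of_ne (hg s) (Ne.symm hs)
      have hmem : g s ∈ (univ.image g).filter fun v => 0 < v := by
        simp only [mem_filter, mem_image]
        exact ⟨⟨s, mem_univ s, rfl⟩, h0⟩
      have : ((univ.image g).filter fun v => 0 < v) = ∅ :=
        card_eq_zero.mp (Nat.le_zero.mp hcard)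
      simp [this] at hmem
    have h1 : (∑ s, g s) = 0 := by simp [hz]
    have h2 : (0:ℝ) ≤ ∑ s : V, ∑ t : V, (if G.Adj s t then max (g s - g t) 0 else 0) := by
      apply Finset.sum_nonneg; intro s _
      apply Finset.sum_nonneg; intro t _
      split <;> simp [le_max_right]
    simpa [h1] using h2
  | succ n ih =>
    intro g hg hsupp hcard
    by_cases hc : ((univ.image g).filter fun v => 0 < v).card ≤ n
    · exact ih g hg hsupp hc
    set S := (univ.image g).filter fun v => 0 < v with hS
    have hne : S.Nonempty := by
      rw [← Finset.card_pos]; omega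
    set M := S.max' hne with hMdef
    have hMS : M ∈ S := S.max'_mem hne
    have hM0 : 0 < M := (mem_filter.mp hMS).2
    have hle : ∀ s, g s ≤ M := by
      intro s
      rcases (hg s).lt_or_eq with h0 | h0
      · exact S.le_max' _ (mem_filter.mpr ⟨mem_image_of_mem g (mem_univ s), h0⟩)
      · rw [← h0]; exact hM0.le
    have hTne : (insert (0:ℝ) (S.erase M)).Nonempty := insert_nonempty _ _
    set m := (insert (0:ℝ) (S.erase M)).max' hTne with hmdef
    have hm0 : 0 ≤ m := le_max' _ 0 (mem_insert_self _ _)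
    have hmM : m < M := by
      rw [hmdef, Finset.max'_lt_iff]
      intro b hb
      rcases mem_insert.mp hb with rfl | hb
      · exact hM0
      · exact lt_of_le_of_ne (S.le_max' _ (mem_of_mem_erase hb)) (ne_of_mem_erase hb)
    have hsm : ∀ s, g s < M → g s ≤ m := by
      intro s hs
      rcases (hg s).lt_or_eq with h0 | h0
      · refine le_max' _ _ (mem_insert_of_mem (mem_erase.mpr ⟨hs.ne, ?_⟩))
        exact mem_filter.mpr ⟨mem_image_of_mem g (mem_univ s), h0⟩
      · rw [← h0]; exact hm0
    set A := univ.filter fun s => M ≤ g s with hA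
    set g' := fun s => min (g s) m with hg'def
    have hg' : ∀ s, 0 ≤ g' s := fun s => le_min (hg s) hm0
    have hsub : (univ.filter fun s => 0 < g' s) ⊆ (univ.filter fun s => 0 < g s) := by
      intro s hs
      simp only [mem_filter, mem_univ, true_and] at hs ⊢
      exact lt_of_lt_of_le hs (min_le_left _ _)
    have hsupp' : 2 * (univ.filter fun s => 0 < g' s).card ≤ Fintype.card V :=
      le_trans (by have := card_le_card hsub; omega) hsupp
    have hcard' : ((univ.image g').filter fun v => 0 < v).card ≤ n := by
      have hsub2 : ((univ.image g').filter fun v => 0 < v) ⊆ S.erase M := by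
        intro v hv
        simp only [mem_filter, mem_image] at hv
        obtain ⟨⟨s, _, rfl⟩, hv0⟩ := hv
        rcases le_total (g s) m with hgs | hgs
        · have : g' s = g s := min_eq_left hgs
          rw [this] at hv0 ⊢
          refine mem_erase.mpr ⟨by linarith [hgs], mem_filter.mpr ⟨mem_image_of_mem g (mem_univ s), hv0⟩⟩
        · have hgm : g' s = m := min_eq_right hgs
          rw [hgm] at hv0 ⊢
          have : m ∈ insert (0:ℝ) (S.erase M) := max'_mem _ _
          rcases mem_insert.mp this with h0 | h0
          · exact absurd h0 hv0.ne'
          · exact h0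
      have h1 : (S.erase M).card = S.card - 1 := card_erase_of_mem hMS
      have := card_le_card hsub2
      omega
    have hAsub : A ⊆ univ.filter fun s => 0 < g s := by
      intro s hs
      simp only [hA, mem_filter, mem_univ, true_and] at hs ⊢
      exact lt_of_lt_of_le hM0 hs
    have hAcard : 2 * A.card ≤ Fintype.card V :=
      le_trans (by have := card_le_card hAsub; omega) hsupp
    -- decomposition of g
    have hdecomp : ∀ s, g s = g' s + (M - m) * (if M ≤ g s then 1 else 0) := by
      intro s
      by_cases hs : M ≤ g s
      · have hgs : g s = M := le_antisymm (hle s) hs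
        have hgs' : g' s = m := by
          simp only [hg'def, hgs]; exact min_eq_right hmM.le
        rw [if_pos hs, hgs', hgs]; ring
      · have : g' s = g s := min_eq_left (hsm s (lt_of_not_ge hs))
        simp [this, hs]
    have hsum : (∑ s, g s) = (∑ s, g' s) + (M - m) * A.card := by
      have h1 : ((A.card : ℝ)) = ∑ s : V, (if M ≤ g s then (1:ℝ) else 0) := by
        rw [hA, Finset.sum_boole]
      rw [h1, Finset.mul_sum, ← Finset.sum_add_distrib]
      exact Finset.sum_congr rfl fun s _ => hdecomp s
    -- crossing sum identity
    have hcross : (∑ s, ∑ t, (if G.Adj s t then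
          (M - m) * (if M ≤ g s ∧ ¬ M ≤ g t then 1 else 0) else 0))
        = (M - m) * ∑ s ∈ A, ∑ t ∈ Aᶜ, (if G.Adj s t then (1:ℝ) else 0) := by
      have hAc : Aᶜ = univ.filter fun t => ¬ M ≤ g t := by
        ext t; simp [hA]
      rw [hAc, hA, Finset.mul_sum]
      rw [Finset.sum_filter]
      apply Finset.sum_congr rfl
      intro s _
      rw [Finset.mul_sum, Finset.sum_filter]
      by_cases hs : M ≤ g s
      · simp only [hs, if_true, true_and]
        apply Finset.sum_congr rfl
        intro t _
        by_cases ht : M ≤ g t <;> by_cases hst : G.Adj s t <;> simp [ht, hst]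
      · simp only [hs, if_false, false_and]
        rw [Finset.sum_eq_zero]
        intro t _
        split <;> simp
    -- pointwise inequality
    have hpt : (∑ s, ∑ t, (if G.Adj s t then max (g' s - g' t) 0 else 0))
        + (∑ s, ∑ t, (if G.Adj s t then
            (M - m) * (if M ≤ g s ∧ ¬ M ≤ g t then 1 else 0) else 0))
        ≤ ∑ s, ∑ t, (if G.Adj s t then max (g s - g t) 0 else 0) := by
      rw [← Finset.sum_add_distrib]
      apply Finset.sum_le_sum
      intro s _
      rw [← Finset.sum_add_distrib]
      apply Finset.sum_le_sum
      intro t _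
      by_cases hst : G.Adj s t
      · simp only [hst, if_true]
        exact aux_pointwise M m (g s) (g t) hmM.le (hle s) (hle t) (hsm s) (hsm t)
      · simp [hst]
    have hIH := ih g' hg' hsupp' hcard'
    have hEXP := hexp A hAcard
    calc h * ∑ s, g s = h * ∑ s, g' s + (M - m) * (h * A.card) := by
          rw [hsum]; ring
      _ ≤ (∑ s, ∑ t, (if G.Adj s t then max (g' s - g' t) 0 else 0))
            + (M - m) * ∑ s ∈ A, ∑ t ∈ Aᶜ, (if G.Adj s t then (1:ℝ) else 0) := by
          gcongr
      _ ≤ ∑ s, ∑ t, (if G.Adj s t then max (g s - g t) 0 else 0) := by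
          rw [← hcross]; exact hpt

/-- For a `(k,h)`-expander `G` and a nonnegative function `f` with `f ≤ R₀` on at least
half of the vertices, the mean of `f` is at most `R₀ + (k/(2h)) Lip(f)`. -/
theorem expander_mean_bound {V : Type} [Fintype V] [DecidableEq V]
    (G : SimpleGraph V) [DecidableRel G.Adj] (k : ℕ) (h : ℝ) (hh : 0 < h)
    (hconn : G.Connected) (hreg : G.IsRegularOfDegree k)
    (hexp : ∀ A : Finset V, 2 * A.card ≤ Fintype.card V →
      h * A.card ≤ ∑ s ∈ A, ∑ t ∈ Aᶜ, (if G.Adj s t then (1 : ℝ) else 0))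
    (f : V → ℝ) (hf : ∀ s, 0 ≤ f s) (R₀ : ℝ)
    (hhalf : Fintype.card V ≤ 2 * (univ.filter fun s => f s ≤ R₀).card)
    (L : ℝ) (hL : ∀ s t, G.Adj s t → |f s - f t| ≤ L) :
    (Fintype.card V : ℝ)⁻¹ * ∑ s, f s ≤ R₀ + ((k : ℝ) / (2 * h)) * L := by
  have hVne : Nonempty V := hconn.nonempty
  have hVpos : 0 < Fintype.card V := Fintype.card_pos
  set g := fun s => max (f s - R₀) 0 with hgdef
  have hg : ∀ s, 0 ≤ g s := fun s => le_max_right _ _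
  have hsupp : 2 * (univ.filter fun s => 0 < g s).card ≤ Fintype.card V := by
    have heq : (univ.filter fun s => 0 < g s) = (univ.filter fun s => f s ≤ R₀)ᶜ := by
      ext s
      simp [hgdef, lt_max_iff, not_le, sub_pos]
    rw [heq]
    have := Finset.card_compl (univ.filter fun s => f s ≤ R₀) (α := V)
    omega
  have hco := coarea G h hexp (((univ.image g).filter fun v => 0 < v).card) g hg hsupp le_rfl
  -- bound the edge sum
  set E := ∑ s, ∑ t, (if G.Adj s t then max (g s - g t) 0 else 0) with hEdef
  have hsym : E = ∑ s, ∑ t, (if G.Adj s t then max (g t - g s) 0 else 0) := by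
    rw [hEdef, Finset.sum_comm]
    apply Finset.sum_congr rfl; intro s _
    apply Finset.sum_congr rfl; intro t _
    by_cases hst : G.Adj s t
    · simp [hst, hst.symm]
    · have hts : ¬ G.Adj t s := fun hts => hst hts.symm
      simp [hst, hts]
  have h2E : 2 * E ≤ (Fintype.card V : ℝ) * (k * L) := by
    have : 2 * E = ∑ s, ∑ t, (if G.Adj s t then |g s - g t| else 0) := by
      rw [two_mul]
      nth_rewrite 2 [hsym]
      rw [← Finset.sum_add_distrib]
      apply Finset.sum_congr rfl; intro s _
      rw [← Finset.sum_add_distrib]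
      apply Finset.sum_congr rfl; intro t _
      by_cases hst : G.Adj s t
      · simp only [hst, if_true]
        rcases le_total (g s) (g t) with hc | hc
        · rw [max_eq_right (by linarith), max_eq_left (by linarith), abs_of_nonpos (by linarith)]
          ring
        · rw [max_eq_left (by linarith), max_eq_right (by linarith), abs_of_nonneg (by linarith)]
          ring
      · simp [hst]
    rw [this]
    have hbound : ∀ s t, G.Adj s t → |g s - g t| ≤ L := by
      intro s t hst
      calc |g s - g t| = |max (f s - R₀) 0 - max (f t - R₀) 0| := rfl
        _ ≤ |(f s - R₀) - (f t - R₀)| := abs_max_sub_max_le_abs _ _ _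
        _ = |f s - f t| := by ring_nf
        _ ≤ L := hL s t hst
    calc ∑ s, ∑ t, (if G.Adj s t then |g s - g t| else 0)
        ≤ ∑ s : V, ∑ t : V, (if G.Adj s t then L else 0) := by
          apply Finset.sum_le_sum; intro s _
          apply Finset.sum_le_sum; intro t _
          by_cases hst : G.Adj s t
          · simpa [hst] using hbound s t hst
          · simp [hst]
      _ = ∑ s : V, (k : ℝ) * L := by
          apply Finset.sum_congr rfl; intro s _
          have hdeg : (∑ t : V, if G.Adj s t then (1:ℝ) else 0) = (k : ℝ) := by
            rw [Finset.sum_boole, ← SimpleGraph.neighborFinset_eq_filter,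
              ← SimpleGraph.degree, hreg s]
          have h2 : (∑ t : V, if G.Adj s t then L else 0)
              = (∑ t : V, if G.Adj s t then (1:ℝ) else 0) * L := by
            rw [Finset.sum_mul]
            apply Finset.sum_congr rfl; intro t _
            split <;> ring
          rw [h2, hdeg]
      _ = (Fintype.card V : ℝ) * (k * L) := by
          rw [Finset.sum_const, Finset.card_univ]
          simp [mul_assoc]
  have hsumf : (∑ s, f s) ≤ (Fintype.card V : ℝ) * R₀ + ∑ s, g s := by
    have hpt : ∀ s : V, f s ≤ R₀ + g s := by
      intro s
      have := le_max_left (f s - R₀) 0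
      simp only [hgdef]
      linarith
    calc (∑ s, f s) ≤ ∑ s : V, (R₀ + g s) := Finset.sum_le_sum fun s _ => hpt s
      _ = (Fintype.card V : ℝ) * R₀ + ∑ s, g s := by
          rw [Finset.sum_add_distrib, Finset.sum_const, Finset.card_univ, nsmul_eq_mul]
  have hsg : ∑ s, g s ≤ (Fintype.card V : ℝ) * (k * L) / (2 * h) := by
    rw [le_div_iff₀ (by positivity)]
    calc (∑ s, g s) * (2 * h) = 2 * (h * ∑ s, g s) := by ring
      _ ≤ 2 * E := by linarith
      _ ≤ (Fintype.card V : ℝ) * (k * L) := h2E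
  rw [inv_mul_le_iff₀ (by positivity)]
  calc (∑ s, f s) ≤ (Fintype.card V : ℝ) * R₀ + (Fintype.card V : ℝ) * (k * L) / (2 * h) := by
        linarith
    _ = (Fintype.card V : ℝ) * (R₀ + (k : ℝ) / (2 * h) * L) := by
        field_simp
end

section
/- Let Γ be a group with Kazhdan's property (T) and Σ a finite generating set. There is h = h(Γ,Σ) > 0 such that for every finite quotient group Δ of Γ, the Cayley graph G(Δ, image of Σ) has expanding constant at least h; i.e., the family of Cayley graphs of finite quotients of Γ forms a family of (|Σ|, h)-expanders. -/
open Finset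
open scoped Classical


noncomputable def sumZero (Δ : Type) [Fintype Δ] : Submodule ℂ (EuclideanSpace ℂ Δ) where
  carrier := {f | ∑ x, f x = 0}
  add_mem' := by
    intro a b ha hb
    simp only [Set.mem_setOf_eq] at *
    show ∑ x, (a x + b x) = 0
    rw [Finset.sum_add_distrib, ha, hb, add_zero]
  zero_mem' := by simp
  smul_mem' := by
    intro c f hf
    simp only [Set.mem_setOf_eq] at *
    show ∑ x, c * f x = 0
    rw [← Finset.mul_sum, hf, mul_zero]

noncomputable instance (priority := 10000) sumZero.nacg (Δ : Type) [Fintype Δ] :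
    NormedAddCommGroup (sumZero Δ) := inferInstance
noncomputable instance (priority := 10000) sumZero.ips (Δ : Type) [Fintype Δ] :
    InnerProductSpace ℂ (sumZero Δ) := inferInstance
@[instance 10000] noncomputable abbrev sumZero.snacg (Δ : Type) [Fintype Δ] :
    SeminormedAddCommGroup (sumZero Δ) := (sumZero.nacg Δ).toSeminormedAddCommGroup
@[instance 10000] noncomputable abbrev sumZero.mod (Δ : Type) [Fintype Δ] :
    Module ℂ (sumZero Δ) := (sumZero.ips Δ).toModule
noncomputable instance (priority := 10000) sumZero.cs (Δ : Type) [Fintype Δ] :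
    CompleteSpace (sumZero Δ) := inferInstance

lemma sum_shift {Δ : Type} [Group Δ] [Fintype Δ] (d : Δ) {M : Type} [AddCommMonoid M]
    (f : Δ → M) : ∑ x, f (x * d) = ∑ x, f x :=
  Fintype.sum_equiv (Equiv.mulRight d) _ _ (fun _ => rfl)

noncomputable def shiftE (Δ : Type) [Group Δ] [Fintype Δ] (d : Δ) :
    sumZero Δ ≃ₗᵢ[ℂ] sumZero Δ where
  toFun f := ⟨WithLp.toLp 2 (fun x => f.1 (x * d)), (sum_shift d f.1).trans f.2⟩
  invFun f := ⟨WithLp.toLp 2 (fun x => f.1 (x * d⁻¹)), (sum_shift d⁻¹ f.1).trans f.2⟩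
  left_inv f := by ext x; show f.1 (x * d⁻¹ * d) = f.1 x; rw [inv_mul_cancel_right]
  right_inv f := by ext x; show f.1 (x * d * d⁻¹) = f.1 x; rw [mul_inv_cancel_right]
  map_add' f g := rfl
  map_smul' c f := rfl
  norm_map' f := by
    show ‖(⟨WithLp.toLp 2 (fun x => f.1 (x * d)), _⟩ : sumZero Δ)‖ = ‖f‖
    rw [show ∀ (v : sumZero Δ), ‖v‖ = ‖v.1‖ from fun _ => rfl]
    rw [show ∀ (v : sumZero Δ), ‖v‖ = ‖v.1‖ from fun _ => rfl]
    rw [EuclideanSpace.norm_eq, EuclideanSpace.norm_eq]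
    congr 1
    exact sum_shift d (fun x => ‖f.1 x‖ ^ 2)

noncomputable def rep (Γ Δ : Type) [Group Γ] [Group Δ] [Fintype Δ] (q : Γ →* Δ) :
    Γ →* (sumZero Δ ≃ₗᵢ[ℂ] sumZero Δ) :=
  MonoidHom.mk' (fun g => shiftE Δ (q g)) (by
    intro a b
    ext f x
    show f.1 (x * q (a * b)) = f.1 (x * q a * q b)
    rw [map_mul, mul_assoc])

lemma rep_apply {Γ Δ : Type} [Group Γ] [Group Δ] [Fintype Δ] (q : Γ →* Δ)
    (g : Γ) (f : sumZero Δ) (x : Δ) : (rep Γ Δ q g f).1 x = f.1 (x * q g) := rfl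
open Finset
open scoped Classical

lemma norm_sq_euclid {Δ : Type} [Fintype Δ] (f : Δ → ℝ) :
    ‖(show EuclideanSpace ℂ Δ from WithLp.toLp 2 (fun x => (f x : ℂ)))‖ ^ 2 = ∑ x, f x ^ 2 := by
  rw [EuclideanSpace.norm_eq, Real.sq_sqrt (by positivity)]
  refine Finset.sum_congr rfl fun x _ => ?_
  rw [PiLp.toLp_apply, Complex.norm_real, Real.norm_eq_abs, sq_abs]

set_option maxHeartbeats 1000000 in
theorem main
    (Γ : Type) [Group Γ] (S : Finset Γ)
    (κ : ℝ) (hκ : 0 < κ)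
    (hT : ∀ (H : Type) [NormedAddCommGroup H] [InnerProductSpace ℂ H] [CompleteSpace H]
      (π : Γ →* (H ≃ₗᵢ[ℂ] H)) (ξ : H), ‖ξ‖ = 1 → (∀ g ∈ S, ‖π g ξ - ξ‖ < κ) →
      ∃ η : H, η ≠ 0 ∧ ∀ g : Γ, π g η = η)
    (Δ : Type) [Group Δ] [Fintype Δ] (q : Γ →* Δ) (hq : Function.Surjective q)
    (A : Finset Δ) (hA : 2 * A.card ≤ Fintype.card Δ) :
      κ^2/8 * A.card ≤ ∑ a ∈ A, ∑ b ∈ Aᶜ,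
        (if ∃ s ∈ S, b = a * q s ∨ a = b * q s then (1 : ℝ) else 0) := by
  classical
  -- the boundary pair set
  set P : Finset (Δ × Δ) :=
    (A ×ˢ Aᶜ).filter (fun p => ∃ s ∈ S, p.2 = p.1 * q s ∨ p.1 = p.2 * q s) with hP
  have hRHS : (∑ a ∈ A, ∑ b ∈ Aᶜ,
      (if ∃ s ∈ S, b = a * q s ∨ a = b * q s then (1 : ℝ) else 0)) = P.card := by
    rw [← Finset.sum_product', hP, Finset.sum_boole]
  rw [hRHS]
  rcases A.eq_empty_or_nonempty with hAe | hAne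
  · simp [hAe]
  -- setup
  set n : ℕ := Fintype.card Δ with hn
  have hn0 : 0 < n := Fintype.card_pos
  have hA1 : (1 : ℝ) ≤ A.card := by exact_mod_cast hAne.card_pos
  set c : ℝ := A.card / n with hc
  have hc0 : 0 ≤ c := by positivity
  have hchalf : c ≤ 1/2 := by
    rw [hc, div_le_div_iff₀ (by exact_mod_cast hn0) (by norm_num)]
    have : (2 : ℝ) * A.card ≤ n := by exact_mod_cast hA
    linarith
  set χ : Δ → ℝ := fun x => if x ∈ A then 1 else 0 with hχ
  have hχsum : ∑ x, χ x = A.card := by simp [hχ]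
  set v : EuclideanSpace ℂ Δ := WithLp.toLp 2 fun x => ((χ x - c : ℝ) : ℂ) with hv
  have hvmem : v ∈ sumZero Δ := by
    show ∑ x, ((χ x - c : ℝ) : ℂ) = 0
    have : ∑ x, (χ x - c) = 0 := by
      rw [Finset.sum_sub_distrib, hχsum, Finset.sum_const, Finset.card_univ, ← hn,
        nsmul_eq_mul, hc]
      field_simp
      ring
    rw [← Complex.ofReal_sum, this, Complex.ofReal_zero]
  set vv : sumZero Δ := ⟨v, hvmem⟩ with hvv
  have hvvnorm : ‖vv‖ ^ 2 = ∑ x, (χ x - c) ^ 2 := by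
    rw [show ‖vv‖ = ‖v‖ from rfl]
    exact norm_sq_euclid (fun x => χ x - c)
  have hlow : (A.card : ℝ) / 4 ≤ ‖vv‖ ^ 2 := by
    rw [hvvnorm]
    calc (A.card : ℝ) / 4 = ∑ _x ∈ A, (1/4 : ℝ) := by rw [Finset.sum_const, nsmul_eq_mul]; ring
    _ ≤ ∑ x ∈ A, (χ x - c) ^ 2 := by
        refine Finset.sum_le_sum fun x hx => ?_
        have : χ x = 1 := by simp [hχ, hx]
        rw [this]; nlinarith
    _ ≤ ∑ x, (χ x - c) ^ 2 := Finset.sum_le_sum_of_subset_of_nonneg (Finset.subset_univ A)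
        (fun x _ _ => by positivity)
  have hvvpos : 0 < ‖vv‖ := by
    have h2 : (0:ℝ) < ‖vv‖^2 := by nlinarith
    nlinarith [norm_nonneg vv]
  set ξ : sumZero Δ := ((‖vv‖⁻¹ : ℝ) : ℂ) • vv with hξ
  have hξnorm : ‖ξ‖ = 1 := by
    rw [hξ, norm_smul, Complex.norm_real, Real.norm_eq_abs, abs_of_pos (by positivity),
      inv_mul_cancel₀ hvvpos.ne']
  -- property (T) gives an expanding generator
  have key : ∃ s ∈ S, κ ≤ ‖rep Γ Δ q s ξ - ξ‖ := by
    by_contra hcon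
    push_neg at hcon
    haveI : NormedAddCommGroup (sumZero Δ) := inferInstance
    haveI : InnerProductSpace ℂ (sumZero Δ) := inferInstance
    haveI : CompleteSpace (sumZero Δ) := inferInstance
    obtain ⟨η, hη0, hηinv⟩ := @hT (sumZero Δ) (sumZero.nacg Δ) (sumZero.ips Δ) (sumZero.cs Δ) (rep Γ Δ q) ξ hξnorm hcon
    apply hη0
    have hconst : ∀ x : Δ, η.1 x = η.1 1 := by
      intro x
      obtain ⟨g, hg⟩ := hq x
      have := congrArg (fun w : sumZero Δ => w.1 1) (hηinv g)
      have h1 : (1 : Δ) * q g = x := by rw [one_mul, hg]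
      rw [← h1]
      exact this
    have hsum := η.2
    have : ∑ x : Δ, η.1 x = (n : ℂ) * η.1 1 := by
      rw [Finset.sum_congr rfl (fun x _ => hconst x), Finset.sum_const, Finset.card_univ,
        ← hn, nsmul_eq_mul]
    have h1 : η.1 1 = 0 := by
      have hne : (n : ℂ) ≠ 0 := by exact_mod_cast hn0.ne'
      have : (n : ℂ) * η.1 1 = 0 := by rw [← this]; exact hsum
      exact (mul_eq_zero.mp this).resolve_left hne
    ext x
    rw [hconst x, h1]
    rfl
  obtain ⟨s, hs, hκs⟩ := key
  set w : sumZero Δ := rep Γ Δ q s vv - vv with hw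
  have hscale : rep Γ Δ q s ξ - ξ = ((‖vv‖⁻¹ : ℝ) : ℂ) • w := by
    rw [hξ, hw, map_smul, smul_sub]
  have hwlow : κ * ‖vv‖ ≤ ‖w‖ := by
    have he : ‖rep Γ Δ q s ξ - ξ‖ = ‖vv‖⁻¹ * ‖w‖ := by
      rw [hscale, norm_smul, Complex.norm_real, Real.norm_eq_abs, abs_of_pos (by positivity)]
    rw [he] at hκs
    calc κ * ‖vv‖ ≤ (‖vv‖⁻¹ * ‖w‖) * ‖vv‖ := mul_le_mul_of_nonneg_right hκs hvvpos.le
    _ = ‖w‖ := by rw [mul_comm (‖vv‖⁻¹) ‖w‖, mul_assoc, inv_mul_cancel₀ hvvpos.ne', mul_one]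
  -- compute ‖w‖²
  set X₁ : Finset Δ := univ.filter (fun x => x ∈ A ∧ x * q s ∉ A) with hX₁
  set X₂ : Finset Δ := univ.filter (fun x => x ∉ A ∧ x * q s ∈ A) with hX₂
  have hwsq : ‖w‖ ^ 2 = (X₁.card : ℝ) + X₂.card := by
    have hwcoe : (w : EuclideanSpace ℂ Δ) =
        (show EuclideanSpace ℂ Δ from WithLp.toLp 2 fun x => ((χ (x * q s) - χ x : ℝ) : ℂ)) := by
      ext x
      rw [PiLp.toLp_apply]
      show (rep Γ Δ q s vv).1 x - vv.1 x = _
      rw [rep_apply]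
      show ((χ (x * q s) - c : ℝ) : ℂ) - ((χ x - c : ℝ) : ℂ) = _
      push_cast
      ring
    rw [show ‖w‖ = ‖(w : EuclideanSpace ℂ Δ)‖ from rfl, hwcoe,
      norm_sq_euclid (fun x => χ (x * q s) - χ x)]
    have : ∀ x : Δ, (χ (x * q s) - χ x) ^ 2 =
        (if x ∈ A ∧ x * q s ∉ A then (1:ℝ) else 0) +
        (if x ∉ A ∧ x * q s ∈ A then (1:ℝ) else 0) := by
      intro x
      by_cases h1 : x ∈ A <;> by_cases h2 : x * q s ∈ A <;> simp [hχ, h1, h2]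
    rw [Finset.sum_congr rfl (fun x _ => this x), Finset.sum_add_distrib,
      Finset.sum_boole, Finset.sum_boole, hX₁, hX₂]
  -- injections into P
  have hinj1 : X₁.card ≤ P.card := by
    apply Finset.card_le_card_of_injOn (fun x => (x, x * q s))
    · intro x hx
      rw [hX₁, Finset.mem_coe, Finset.mem_filter] at hx
      rw [hP, Finset.mem_coe, Finset.mem_filter]
      exact ⟨Finset.mem_product.mpr ⟨hx.2.1, Finset.mem_compl.mpr hx.2.2⟩,
        ⟨s, hs, Or.inl rfl⟩⟩
    · intro a _ b _ h
      exact (Prod.mk.injEq _ _ _ _).mp h |>.1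
  have hinj2 : X₂.card ≤ P.card := by
    apply Finset.card_le_card_of_injOn (fun x => (x * q s, x))
    · intro x hx
      rw [hX₂, Finset.mem_coe, Finset.mem_filter] at hx
      rw [hP, Finset.mem_coe, Finset.mem_filter]
      exact ⟨Finset.mem_product.mpr ⟨hx.2.2, Finset.mem_compl.mpr hx.2.1⟩,
        ⟨s, hs, Or.inr rfl⟩⟩
    · intro a _ b _ h
      exact (Prod.mk.injEq _ _ _ _).mp h |>.2
  -- put it together
  have hchain : κ ^ 2 * (A.card / 4) ≤ 2 * P.card := by
    have h1 : κ ^ 2 * ‖vv‖ ^ 2 ≤ ‖w‖ ^ 2 := by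
      nlinarith [mul_le_mul hwlow hwlow (by positivity) (norm_nonneg w)]
    have h2 : (X₁.card : ℝ) + X₂.card ≤ 2 * P.card := by
      have := hinj1; have := hinj2
      push_cast
      have a1 : (X₁.card : ℝ) ≤ P.card := by exact_mod_cast hinj1
      have a2 : (X₂.card : ℝ) ≤ P.card := by exact_mod_cast hinj2
      linarith
    nlinarith
  nlinarith


/-- Margulis' construction: if `Γ` has Kazhdan's property (T) with finite generating set
`Σ`, then there is `h > 0` such that the Cayley graph of every finite quotient of `Γ`
(with respect to the image of `Σ`) has expanding constant at least `h`. -/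
theorem cayley_graphs_of_finite_quotients_are_expanders
    (Γ : Type) [Group Γ] (S : Finset Γ) (hgen : Subgroup.closure (S : Set Γ) = ⊤)
    (κ : ℝ) (hκ : 0 < κ)
    (hT : ∀ (H : Type) [NormedAddCommGroup H] [InnerProductSpace ℂ H] [CompleteSpace H]
      (π : Γ →* (H ≃ₗᵢ[ℂ] H)) (ξ : H), ‖ξ‖ = 1 → (∀ g ∈ S, ‖π g ξ - ξ‖ < κ) →
      ∃ η : H, η ≠ 0 ∧ ∀ g : Γ, π g η = η) :
    ∃ h > (0 : ℝ), ∀ (Δ : Type) [Group Δ] [Fintype Δ] (q : Γ →* Δ),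
      Function.Surjective q →
      ∀ A : Finset Δ, 2 * A.card ≤ Fintype.card Δ →
        h * A.card ≤ ∑ a ∈ A, ∑ b ∈ Aᶜ,
          (if ∃ s ∈ S, b = a * q s ∨ a = b * q s then (1 : ℝ) else 0) := by
  refine ⟨κ ^ 2 / 8, by positivity, ?_⟩
  intro Δ _ _ q hq A hA
  exact main Γ S κ hκ hT Δ q hq A hA
end
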